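/- arXiv:2410.04459 — 8 statements merged into one kernel-verified Lean document; each statement's English description precedes it below -/
import Mathlib

section
/- Assume 𝒜 ≠ 0 or ŝ ≠ 0. Let D ⊆ ℝ^d be closed and convex and let x₀ ∈ D solve max_{x∈D} E[U(W(x))] for the exponential utility U(w) = −e^{−aw}, a > 0. If x₀ lies in the interior of D in the Euclidean topology of ℝ^d, then x₀ = (1/(aW₀))·[Σ⁻¹γ − q_d·Σ⁻¹(μ − 𝟏r_f)], where q_d is the minimizer of Q(θ) over D̄_q. -/
open MeasureTheory ProbabilityTheory Filter Matrix
open scoped ENNReal NNReal Topology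

noncomputable section

/-- Signed expectation with values in `EReal`. -/
def eexp {Ω : Type*} [MeasurableSpace Ω] (P : Measure Ω) (f : Ω → ℝ) : EReal :=
  ((∫⁻ ω, ENNReal.ofReal (f ω) ∂P : ℝ≥0∞) : EReal) -
    ((∫⁻ ω, ENNReal.ofReal (-(f ω)) ∂P : ℝ≥0∞) : EReal)

/-- NMVM return vector `X = μ + γ Z + √Z A N`. -/
def nmvmX {Ω : Type*} {d : ℕ} (μ γ : Fin d → ℝ) (A : Matrix (Fin d) (Fin d) ℝ)
    (Z : Ω → ℝ) (N : Ω → Fin d → ℝ) (ω : Ω) : Fin d → ℝ :=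
  fun i => μ i + γ i * Z ω + Real.sqrt (Z ω) * (A *ᵥ N ω) i

/-- Next-period wealth `W(x) = W₀(1+r_f) + W₀ xᵀ(X − 𝟏 r_f)` of portfolio `x`. -/
def wealth {Ω : Type*} {d : ℕ} (μ γ : Fin d → ℝ) (A : Matrix (Fin d) (Fin d) ℝ)
    (Z : Ω → ℝ) (N : Ω → Fin d → ℝ) (rf W0 : ℝ) (x : Fin d → ℝ) (ω : Ω) : ℝ :=
  W0 * (1 + rf) + W0 * ∑ i, x i * (nmvmX μ γ A Z N ω i - rf)

/-- Expected exponential utility `E[-e^{-a W(x)}]` as an extended real. -/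
def expUtil {Ω : Type*} [MeasurableSpace Ω] (P : Measure Ω) {d : ℕ}
    (μ γ : Fin d → ℝ) (A : Matrix (Fin d) (Fin d) ℝ)
    (Z : Ω → ℝ) (N : Ω → Fin d → ℝ) (rf W0 a : ℝ) (x : Fin d → ℝ) : EReal :=
  eexp P fun ω => -Real.exp (-(a * wealth μ γ A Z N rf W0 x ω))

/-- Laplace transform `ℒ_Z(s) = E[e^{-sZ}]` of the mixing distribution. -/
def laplaceZ {Ω : Type*} [MeasurableSpace Ω] (P : Measure Ω) (Z : Ω → ℝ) (s : ℝ) : ℝ≥0∞ :=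
  ∫⁻ ω, ENNReal.ofReal (Real.exp (-s * Z ω)) ∂P

/-- The interval `Θ`: `(−θ̂, θ̂)` with `θ̂ = √((𝒜 − 2ŝ)/𝒞)` when `ŝ = −∞` or `ℒ_Z(ŝ) = ∞`,
and `[−θ̂, θ̂]` when `ŝ` is finite with `ℒ_Z(ŝ) < ∞`.  Equivalently (using `𝒞 > 0`):
`θ ∈ Θ` iff the argument `𝒜/2 − θ²𝒞/2` is `> ŝ`, or equals `ŝ` with `ℒ_Z(ŝ) < ∞`. -/
def ThetaSet {Ω : Type*} [MeasurableSpace Ω] (P : Measure Ω) (Z : Ω → ℝ)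
    (sHat : EReal) (Acal Ccal : ℝ) : Set ℝ :=
  {θ : ℝ | sHat < ((Acal / 2 - θ ^ 2 * Ccal / 2 : ℝ) : EReal) ∨
    (((Acal / 2 - θ ^ 2 * Ccal / 2 : ℝ) : EReal) = sHat ∧
      laplaceZ P Z (Acal / 2 - θ ^ 2 * Ccal / 2) ≠ ⊤)}

/-- The function `Q(θ) = e^{𝒞θ} ℒ_Z(𝒜/2 − θ²𝒞/2)`. -/
def Qfun {Ω : Type*} [MeasurableSpace Ω] (P : Measure Ω) (Z : Ω → ℝ)
    (Acal Ccal : ℝ) (θ : ℝ) : ℝ :=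
  Real.exp (Ccal * θ) * (laplaceZ P Z (Acal / 2 - θ ^ 2 * Ccal / 2)).toReal

/-! By Gaussian conditioning, with `m = μ - 𝟏r_f`,
`E[e^{-aW(x)}] = e^{-aW₀(1+r_f) - aW₀ xᵀm} ℒ_Z(aW₀ xᵀγ - (aW₀)² xᵀΣx/2)`.
On the hyperplane `xᵀm = c`, completing the square turns the argument of `ℒ_Z` into
`𝒜/2 - q²𝒞/2 - (aW₀)² (x - x_q)ᵀΣ(x - x_q)/2`, where `q = q_c` and `x_q = (Σ⁻¹γ - q Σ⁻¹m)/(aW₀)`.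
Unless `Z = 0` a.s. (then the objective is strictly monotone in the direction `m` and has no
interior optimum), `ℒ_Z` is strictly decreasing where finite, so an interior optimum must be `x_q`.
Along the line `θ ↦ x_θ` the objective is a constant multiple of `Q(θ)`, so `q` is a local minimum
of `Q`; as `Q` is convex where finite, it is a global minimum on `Θ`. -/

lemma Matrix.IsSymm.dotProduct_mulVec_comm {n α : Type*} [Fintype n] [CommSemiring α]
    {M : Matrix n n α} (hM : M.IsSymm) (u v : n → α) : u ⬝ᵥ (M *ᵥ v) = v ⬝ᵥ (M *ᵥ u) := by
  rw [dotProduct_mulVec, ← mulVec_transpose, hM.eq, dotProduct_comm]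

lemma ENNReal.ne_top_of_mul_ne_top_right {a b : ℝ≥0∞} (h : a * b ≠ ⊤) (ha : a ≠ 0) : b ≠ ⊤ :=
  fun hb => h (by rw [hb, ENNReal.mul_top ha])

section LinePortfolio

variable {d : ℕ} {S : Matrix (Fin d) (Fin d) ℝ} {γ m : Fin d → ℝ} {k : ℝ}

lemma dotProduct_sub_half_quadratic_eq (hS : S.IsSymm) (hdet : IsUnit S.det) (y g : Fin d → ℝ) :
    y ⬝ᵥ g - y ⬝ᵥ (S *ᵥ y) / 2
      = g ⬝ᵥ (S⁻¹ *ᵥ g) / 2 - (y - S⁻¹ *ᵥ g) ⬝ᵥ (S *ᵥ (y - S⁻¹ *ᵥ g)) / 2 := by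
  have hSu : S *ᵥ (S⁻¹ *ᵥ g) = g := by rw [mulVec_mulVec, mul_nonsing_inv _ hdet, one_mulVec]
  rw [mulVec_sub, dotProduct_sub, sub_dotProduct, sub_dotProduct,
    hS.dotProduct_mulVec_comm (S⁻¹ *ᵥ g) y, hSu, dotProduct_comm (S⁻¹ *ᵥ g) g]
  ring

variable (S γ m k) in
def linePortfolio (θ : ℝ) : Fin d → ℝ := (1 / k) • (S⁻¹ *ᵥ γ - θ • (S⁻¹ *ᵥ m))

lemma smul_linePortfolio (hk : k ≠ 0) (θ : ℝ) :
    k • linePortfolio S γ m k θ = S⁻¹ *ᵥ (γ - θ • m) := by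
  rw [linePortfolio, smul_smul, mul_one_div_cancel hk, one_smul, mulVec_sub, mulVec_smul]

lemma linePortfolio_dotProduct (hS : S.IsSymm) (hk : k ≠ 0) (θ : ℝ) :
    linePortfolio S γ m k θ ⬝ᵥ m
      = (γ ⬝ᵥ (S⁻¹ *ᵥ m) - θ * (m ⬝ᵥ (S⁻¹ *ᵥ m))) / k := by
  rw [eq_div_iff hk, mul_comm, ← smul_eq_mul, ← smul_dotProduct, smul_linePortfolio hk,
    dotProduct_comm, hS.inv.dotProduct_mulVec_comm, sub_dotProduct, smul_dotProduct, smul_eq_mul]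

lemma meanVariance_eq_sub_linePortfolio (hS : S.IsSymm) (hdet : IsUnit S.det) (hk : k ≠ 0)
    {x : Fin d → ℝ} {q : ℝ}
    (hq : q * (m ⬝ᵥ (S⁻¹ *ᵥ m)) = γ ⬝ᵥ (S⁻¹ *ᵥ m) - k * (x ⬝ᵥ m)) :
    k * (x ⬝ᵥ γ) - k ^ 2 * (x ⬝ᵥ (S *ᵥ x)) / 2
      = γ ⬝ᵥ (S⁻¹ *ᵥ γ) / 2 - q ^ 2 * (m ⬝ᵥ (S⁻¹ *ᵥ m)) / 2
        - k ^ 2 * ((x - linePortfolio S γ m k q) ⬝ᵥ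
            (S *ᵥ (x - linePortfolio S γ m k q))) / 2 := by
  have h := dotProduct_sub_half_quadratic_eq hS hdet (k • x) (γ - q • m)
  have hg : (γ - q • m) ⬝ᵥ (S⁻¹ *ᵥ (γ - q • m))
      = γ ⬝ᵥ (S⁻¹ *ᵥ γ) - 2 * q * (γ ⬝ᵥ (S⁻¹ *ᵥ m)) + q ^ 2 * (m ⬝ᵥ (S⁻¹ *ᵥ m)) := by
    simp only [mulVec_sub, mulVec_smul, dotProduct_sub, sub_dotProduct, dotProduct_smul,
      smul_dotProduct, smul_eq_mul, hS.inv.dotProduct_mulVec_comm m γ]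
    ring
  rw [hg, ← smul_linePortfolio hk, ← smul_sub k x] at h
  simp only [mulVec_smul, dotProduct_smul, smul_dotProduct, smul_eq_mul, dotProduct_sub] at h
  linear_combination h + q * hq

variable (S γ m k) in
def laplaceObjective (κ : ℝ) (L : ℝ → ℝ≥0∞) (x : Fin d → ℝ) : ℝ≥0∞ :=
  ENNReal.ofReal (Real.exp (κ - k * (x ⬝ᵥ m))) *
    L (k * (x ⬝ᵥ γ) - k ^ 2 * (x ⬝ᵥ (S *ᵥ x)) / 2)

lemma laplaceObjective_linePortfolio (hS : S.IsSymm) (hdet : IsUnit S.det) (hk : k ≠ 0)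
    (κ : ℝ) (L : ℝ → ℝ≥0∞) (θ : ℝ) :
    laplaceObjective S γ m k κ L (linePortfolio S γ m k θ)
      = ENNReal.ofReal (Real.exp (κ - γ ⬝ᵥ (S⁻¹ *ᵥ m))) *
        (ENNReal.ofReal (Real.exp (m ⬝ᵥ (S⁻¹ *ᵥ m) * θ)) *
          L (γ ⬝ᵥ (S⁻¹ *ᵥ γ) / 2 - θ ^ 2 * (m ⬝ᵥ (S⁻¹ *ᵥ m)) / 2)) := by
  have hdot := linePortfolio_dotProduct (γ := γ) (m := m) hS hk θ
  have hq : θ * (m ⬝ᵥ (S⁻¹ *ᵥ m))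
      = γ ⬝ᵥ (S⁻¹ *ᵥ m) - k * (linePortfolio S γ m k θ ⬝ᵥ m) := by
    rw [hdot, mul_div_cancel₀ _ hk]
    ring
  rw [laplaceObjective, meanVariance_eq_sub_linePortfolio hS hdet hk hq, sub_self, mulVec_zero,
    dotProduct_zero, mul_zero, zero_div, sub_zero, hdot, mul_div_cancel₀ _ hk, ← mul_assoc,
    ← ENNReal.ofReal_mul (Real.exp_nonneg _), ← Real.exp_add]
  ring_nf

lemma IsLocalMin.exists_mem_Ioo_le_add_smul {E β : Type*} [TopologicalSpace E] [AddCommGroup E]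
    [Module ℝ E] [ContinuousAdd E] [ContinuousSMul ℝ E] [Preorder β] {f : E → β} {x : E}
    (h : IsLocalMin f x) (v : E) : ∃ ε ∈ Set.Ioo (0 : ℝ) 1, f x ≤ f (x + ε • v) := by
  have hline : Tendsto (fun ε : ℝ => x + ε • v) (𝓝[>] 0) (𝓝 x) :=
    ((continuous_const.add (continuous_id.smul continuous_const)).tendsto' 0 x (by simp)).mono_left
      nhdsWithin_le_nhds
  obtain ⟨ε, hle, hε⟩ := ((hline.eventually h).and (Ioo_mem_nhdsGT one_pos)).exists
  exact ⟨ε, hε, hle⟩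

/-- If `x₀ ≠ x_q`, moving from `x₀` towards `x_q` within the hyperplane `x ⬝ᵥ m = x₀ ⬝ᵥ m` shrinks
the quadratic penalty and so strictly increases the argument of `L`. -/
lemma eq_linePortfolio_of_isLocalMin (hS : S.PosDef) (hk : k ≠ 0) (hm : m ≠ 0) {κ : ℝ}
    {L : ℝ → ℝ≥0∞} (hL : ∀ ⦃s₁ s₂⦄, s₁ < s₂ → L s₁ ≠ ⊤ → L s₂ < L s₁) {x₀ : Fin d → ℝ}
    (hmin : IsLocalMin (laplaceObjective S γ m k κ L) x₀)
    (hfin : laplaceObjective S γ m k κ L x₀ ≠ ⊤) :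
    x₀ = linePortfolio S γ m k
      ((γ ⬝ᵥ (S⁻¹ *ᵥ m) - k * (x₀ ⬝ᵥ m)) / (m ⬝ᵥ (S⁻¹ *ᵥ m))) := by
  set q := (γ ⬝ᵥ (S⁻¹ *ᵥ m) - k * (x₀ ⬝ᵥ m)) / (m ⬝ᵥ (S⁻¹ *ᵥ m))
  set xq := linePortfolio S γ m k q
  have hC : 0 < m ⬝ᵥ (S⁻¹ *ᵥ m) := by simpa using hS.inv.dotProduct_mulVec_pos hm
  have hSsymm : S.IsSymm := isHermitian_iff_isSymm.mp hS.isHermitian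
  have hdet : IsUnit S.det := (isUnit_iff_isUnit_det S).mp hS.isUnit
  have hq : ∀ x : Fin d → ℝ, x ⬝ᵥ m = x₀ ⬝ᵥ m →
      q * (m ⬝ᵥ (S⁻¹ *ᵥ m)) = γ ⬝ᵥ (S⁻¹ *ᵥ m) - k * (x ⬝ᵥ m) := fun x hx => by
    rw [hx, div_mul_cancel₀ _ hC.ne']
  by_contra hne
  obtain ⟨ε, ⟨hε0, hε1⟩, hle⟩ := hmin.exists_mem_Ioo_le_add_smul (xq - x₀)
  set x₁ := x₀ + ε • (xq - x₀)
  have hxqm : xq ⬝ᵥ m = x₀ ⬝ᵥ m := by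
    rw [linePortfolio_dotProduct hSsymm hk, hq x₀ rfl]
    field_simp
    ring
  have hx₁m : x₁ ⬝ᵥ m = x₀ ⬝ᵥ m := by
    simp only [x₁, add_dotProduct, smul_dotProduct, sub_dotProduct, hxqm, sub_self, smul_zero,
      add_zero]
  have hx₁ : x₁ - xq = (1 - ε) • (x₀ - xq) := by module
  have hδ : 0 < (x₀ - xq) ⬝ᵥ (S *ᵥ (x₀ - xq)) := by
    simpa using hS.dotProduct_mulVec_pos (sub_ne_zero.mpr hne)
  have hlt : k * (x₀ ⬝ᵥ γ) - k ^ 2 * (x₀ ⬝ᵥ (S *ᵥ x₀)) / 2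
      < k * (x₁ ⬝ᵥ γ) - k ^ 2 * (x₁ ⬝ᵥ (S *ᵥ x₁)) / 2 := by
    rw [meanVariance_eq_sub_linePortfolio hSsymm hdet hk (hq x₀ rfl),
      meanVariance_eq_sub_linePortfolio hSsymm hdet hk (hq x₁ hx₁m), hx₁, mulVec_smul,
      smul_dotProduct, dotProduct_smul, smul_eq_mul, smul_eq_mul]
    have hk2 : 0 < k ^ 2 := by positivity
    nlinarith [mul_pos hk2 hδ, mul_pos hε0 (sub_pos.mpr hε1)]
  have hexp0 : ENNReal.ofReal (Real.exp (κ - k * (x₀ ⬝ᵥ m))) ≠ 0 := by positivity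
  have hL₀ : L (k * (x₀ ⬝ᵥ γ) - k ^ 2 * (x₀ ⬝ᵥ (S *ᵥ x₀)) / 2) ≠ ⊤ :=
    ENNReal.ne_top_of_mul_ne_top_right hfin hexp0
  refine hle.not_gt ?_
  rw [laplaceObjective, laplaceObjective, hx₁m]
  exact (ENNReal.mul_lt_mul_iff_right hexp0 ENNReal.ofReal_ne_top).mpr (hL hlt hL₀)

lemma isLocalMin_of_isLocalMin_linePortfolio (hS : S.IsSymm) (hdet : IsUnit S.det) (hk : k ≠ 0)
    {κ : ℝ} {L : ℝ → ℝ≥0∞} {q : ℝ}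
    (hmin : IsLocalMin (laplaceObjective S γ m k κ L) (linePortfolio S γ m k q)) :
    IsLocalMin (fun θ => ENNReal.ofReal (Real.exp (m ⬝ᵥ (S⁻¹ *ᵥ m) * θ)) *
      L (γ ⬝ᵥ (S⁻¹ *ᵥ γ) / 2 - θ ^ 2 * (m ⬝ᵥ (S⁻¹ *ᵥ m)) / 2)) q := by
  have hcont : Continuous (linePortfolio S γ m k) := by unfold linePortfolio; fun_prop
  filter_upwards [hmin.comp_continuous hcont.continuousAt] with θ hθ
  simp only [Function.comp_apply, laplaceObjective_linePortfolio hS hdet hk] at hθ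
  exact (ENNReal.mul_le_mul_iff_right (by positivity) ENNReal.ofReal_ne_top).mp hθ

lemma not_isLocalMin_laplaceObjective_of_eq_one (hk : 0 < k) (hm : m ≠ 0) {κ : ℝ}
    {L : ℝ → ℝ≥0∞} (hL : ∀ s, L s = 1) (x₀ : Fin d → ℝ) :
    ¬ IsLocalMin (laplaceObjective S γ m k κ L) x₀ := by
  intro hmin
  obtain ⟨ε, ⟨hε0, -⟩, hle⟩ := hmin.exists_mem_Ioo_le_add_smul m
  have hmm : 0 < m ⬝ᵥ m := by simpa using dotProduct_star_self_pos_iff.mpr hm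
  refine hle.not_gt ?_
  simp only [laplaceObjective, hL, mul_one, add_dotProduct, smul_dotProduct, smul_eq_mul]
  rw [ENNReal.ofReal_lt_ofReal_iff (Real.exp_pos _), Real.exp_lt_exp]
  nlinarith [mul_pos hk (mul_pos hε0 hmm)]

end LinePortfolio

section Laplace

variable {Ω : Type*} [MeasurableSpace Ω] (P : Measure Ω) {Z : Ω → ℝ}

lemma laplaceZ_lt_laplaceZ (hZ : Measurable Z) (hZpos : ∀ ω, 0 ≤ Z ω)
    (hZ0 : P {ω | 0 < Z ω} ≠ 0) {s₁ s₂ : ℝ} (h : s₁ < s₂) (hfin : laplaceZ P Z s₁ ≠ ⊤) :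
    laplaceZ P Z s₂ < laplaceZ P Z s₁ := by
  have hle : ∀ ω, ENNReal.ofReal (Real.exp (-s₂ * Z ω)) ≤ ENNReal.ofReal (Real.exp (-s₁ * Z ω)) :=
    fun ω => ENNReal.ofReal_le_ofReal (Real.exp_le_exp.2 (by nlinarith [hZpos ω]))
  refine lintegral_strict_mono_of_ae_le_of_ae_lt_on (by fun_prop)
    (ne_top_of_le_ne_top hfin (lintegral_mono hle)) (ae_of_all _ hle) hZ0 (ae_of_all _ ?_)
  intro ω (hω : 0 < Z ω)
  exact (ENNReal.ofReal_lt_ofReal_iff (Real.exp_pos _)).2 (Real.exp_lt_exp.2 (by nlinarith))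

lemma laplaceZ_eq_one [IsProbabilityMeasure P] (hZpos : ∀ ω, 0 ≤ Z ω)
    (hZ0 : P {ω | 0 < Z ω} = 0) (s : ℝ) : laplaceZ P Z s = 1 := by
  have hZae : ∀ᵐ ω ∂P, Z ω = 0 :=
    (measure_eq_zero_iff_ae_notMem.mp hZ0).mono fun ω h => le_antisymm (not_lt.mp h) (hZpos ω)
  rw [laplaceZ, lintegral_congr_ae (g := fun _ => 1) (hZae.mono fun ω h => by simp [h])]
  simp

lemma convexOn_toReal_lintegral_exp {E : Type*} [AddCommGroup E] [Module ℝ E]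
    {F : E → Ω → ℝ} (hF_meas : ∀ θ, Measurable (F θ)) (hF : ∀ ω, ConvexOn ℝ Set.univ (F · ω)) :
    ConvexOn ℝ {θ | ∫⁻ ω, ENNReal.ofReal (Real.exp (F θ ω)) ∂P ≠ ⊤}
      fun θ => (∫⁻ ω, ENNReal.ofReal (Real.exp (F θ ω)) ∂P).toReal := by
  set I := fun θ => ∫⁻ ω, ENNReal.ofReal (Real.exp (F θ ω)) ∂P
  have key : ∀ θ₁ θ₂ : E, ∀ ⦃a b : ℝ⦄, 0 ≤ a → 0 ≤ b → a + b = 1 →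
      I (a • θ₁ + b • θ₂) ≤ ENNReal.ofReal a * I θ₁ + ENNReal.ofReal b * I θ₂ := by
    intro θ₁ θ₂ a b ha hb hab
    have hmeas : ∀ θ, Measurable fun ω => ENNReal.ofReal (Real.exp (F θ ω)) := fun θ =>
      (hF_meas θ).exp.ennreal_ofReal
    rw [← lintegral_const_mul _ (hmeas θ₁), ← lintegral_const_mul _ (hmeas θ₂),
      ← lintegral_add_left ((hmeas θ₁).const_mul _)]
    refine lintegral_mono fun ω => ?_
    rw [← ENNReal.ofReal_mul ha, ← ENNReal.ofReal_mul hb,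
      ← ENNReal.ofReal_add (by positivity) (by positivity)]
    refine ENNReal.ofReal_le_ofReal ?_
    calc Real.exp (F (a • θ₁ + b • θ₂) ω) ≤ Real.exp (a • F θ₁ ω + b • F θ₂ ω) :=
          Real.exp_le_exp.2 ((hF ω).2 trivial trivial ha hb hab)
      _ ≤ a • Real.exp (F θ₁ ω) + b • Real.exp (F θ₂ ω) :=
          convexOn_exp.2 trivial trivial ha hb hab
  have hfin : ∀ {θ₁ θ₂ : E} (a b : ℝ), I θ₁ ≠ ⊤ → I θ₂ ≠ ⊤ →
      ENNReal.ofReal a * I θ₁ + ENNReal.ofReal b * I θ₂ ≠ ⊤ := fun a b h₁ h₂ =>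
    ENNReal.add_ne_top.2 ⟨ENNReal.mul_ne_top ENNReal.ofReal_ne_top h₁,
      ENNReal.mul_ne_top ENNReal.ofReal_ne_top h₂⟩
  refine ⟨fun θ₁ h₁ θ₂ h₂ a b ha hb hab =>
    ne_top_of_le_ne_top (hfin a b h₁ h₂) (key θ₁ θ₂ ha hb hab),
    fun θ₁ h₁ θ₂ h₂ a b ha hb hab => ?_⟩
  calc (I (a • θ₁ + b • θ₂)).toReal
      ≤ (ENNReal.ofReal a * I θ₁ + ENNReal.ofReal b * I θ₂).toReal :=
        ENNReal.toReal_mono (hfin a b h₁ h₂) (key θ₁ θ₂ ha hb hab)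
    _ = a • (I θ₁).toReal + b • (I θ₂).toReal := by
        rw [ENNReal.toReal_add (ENNReal.mul_ne_top ENNReal.ofReal_ne_top h₁)
          (ENNReal.mul_ne_top ENNReal.ofReal_ne_top h₂), ENNReal.toReal_mul, ENNReal.toReal_mul,
          ENNReal.toReal_ofReal ha, ENNReal.toReal_ofReal hb, smul_eq_mul, smul_eq_mul]

/-- `Qfun` is the `toReal` of this, hence junk (`0`) where `ℒ_Z = ∞`. -/
def QfunENNReal (Z : Ω → ℝ) (Acal Ccal θ : ℝ) : ℝ≥0∞ :=
  ENNReal.ofReal (Real.exp (Ccal * θ)) * laplaceZ P Z (Acal / 2 - θ ^ 2 * Ccal / 2)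

lemma Qfun_eq_toReal (Acal Ccal θ : ℝ) :
    Qfun P Z Acal Ccal θ = (QfunENNReal P Z Acal Ccal θ).toReal := by
  rw [Qfun, QfunENNReal, ENNReal.toReal_mul, ENNReal.toReal_ofReal (Real.exp_nonneg _)]

lemma QfunENNReal_eq_lintegral (Acal Ccal θ : ℝ) :
    QfunENNReal P Z Acal Ccal θ
      = ∫⁻ ω, ENNReal.ofReal (Real.exp (Ccal * θ + (θ ^ 2 * Ccal / 2 - Acal / 2) * Z ω)) ∂P := by
  rw [QfunENNReal, laplaceZ, ← lintegral_const_mul' _ _ ENNReal.ofReal_ne_top]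
  congr 1 with ω
  rw [← ENNReal.ofReal_mul (Real.exp_nonneg _), ← Real.exp_add]
  ring_nf

lemma convexOn_Qfun (hZ : Measurable Z) (hZpos : ∀ ω, 0 ≤ Z ω) {Acal Ccal : ℝ} (hC : 0 ≤ Ccal) :
    ConvexOn ℝ {θ | QfunENNReal P Z Acal Ccal θ ≠ ⊤} (Qfun P Z Acal Ccal) := by
  have hconv : ∀ ω, ConvexOn ℝ Set.univ
      fun θ : ℝ => Ccal * θ + (θ ^ 2 * Ccal / 2 - Acal / 2) * Z ω := by
    refine fun ω => ⟨convex_univ, fun x _ y _ a b ha hb hab => ?_⟩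
    obtain rfl : b = 1 - a := by linarith
    simp only [smul_eq_mul]
    nlinarith [mul_nonneg (mul_nonneg ha hb)
      (mul_nonneg (mul_nonneg hC (hZpos ω)) (sq_nonneg (x - y)))]
  have h := convexOn_toReal_lintegral_exp P (fun θ => by fun_prop) hconv
  simp_rw [← QfunENNReal_eq_lintegral, ← Qfun_eq_toReal] at h
  exact h

lemma isMinOn_Qfun_of_isLocalMin (hZ : Measurable Z) (hZpos : ∀ ω, 0 ≤ Z ω) {Acal Ccal : ℝ}
    (hC : 0 ≤ Ccal) {q : ℝ} (hmin : IsLocalMin (QfunENNReal P Z Acal Ccal) q)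
    (hq : QfunENNReal P Z Acal Ccal q ≠ ⊤) :
    IsMinOn (Qfun P Z Acal Ccal) {θ | QfunENNReal P Z Acal Ccal θ ≠ ⊤} q := by
  refine IsMinOn.of_isLocalMinOn_of_convexOn hq ?_ (convexOn_Qfun P hZ hZpos hC)
  filter_upwards [hmin.on _, self_mem_nhdsWithin] with θ hθ (hθfin : _ ≠ ⊤)
  rw [Qfun_eq_toReal, Qfun_eq_toReal]
  exact ENNReal.toReal_mono hθfin hθ

lemma mem_ThetaSet_of_laplaceZ_ne_top {sHat : EReal}
    (hsHat_inf : ∀ s : ℝ, (s : EReal) < sHat → laplaceZ P Z s = ⊤) {Acal Ccal θ : ℝ}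
    (h : laplaceZ P Z (Acal / 2 - θ ^ 2 * Ccal / 2) ≠ ⊤) : θ ∈ ThetaSet P Z sHat Acal Ccal := by
  rcases lt_trichotomy sHat ((Acal / 2 - θ ^ 2 * Ccal / 2 : ℝ) : EReal) with hlt | heq | hgt
  · exact Or.inl hlt
  · exact Or.inr ⟨heq.symm, h⟩
  · exact absurd (hsHat_inf _ hgt) h

lemma laplaceZ_ne_top_of_mem_ThetaSet {sHat : EReal}
    (hsHat_fin : ∀ s : ℝ, sHat < (s : EReal) → laplaceZ P Z s ≠ ⊤) {Acal Ccal θ : ℝ}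
    (hθ : θ ∈ ThetaSet P Z sHat Acal Ccal) : laplaceZ P Z (Acal / 2 - θ ^ 2 * Ccal / 2) ≠ ⊤ := by
  rcases hθ with h | ⟨-, h⟩
  exacts [hsHat_fin _ h, h]

end Laplace

lemma lintegral_exp_mul_gaussianReal (μ : ℝ) (v : ℝ≥0) (t : ℝ) :
    ∫⁻ y, ENNReal.ofReal (Real.exp (t * y)) ∂gaussianReal μ v
      = ENNReal.ofReal (Real.exp (μ * t + v * t ^ 2 / 2)) := by
  rw [← ofReal_integral_eq_lintegral_ofReal (integrable_exp_mul_gaussianReal t)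
    (ae_of_all _ fun _ => (Real.exp_pos _).le)]
  have h := congr_fun (mgf_id_gaussianReal (μ := μ) (v := v)) t
  rw [mgf] at h
  simp only [id] at h
  rw [h]

lemma lintegral_exp_dotProduct_pi_gaussianReal {ι : Type*} [Fintype ι] (b : ι → ℝ) :
    ∫⁻ y, ENNReal.ofReal (Real.exp (b ⬝ᵥ y)) ∂(Measure.pi fun _ : ι => gaussianReal 0 1)
      = ENNReal.ofReal (Real.exp (b ⬝ᵥ b / 2)) := by
  classical
  have hprod : ∀ y : ι → ℝ, ENNReal.ofReal (Real.exp (b ⬝ᵥ y))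
      = ∏ i, ENNReal.ofReal (Real.exp (b i * y i)) := fun y => by
    rw [dotProduct, Real.exp_sum, ENNReal.ofReal_prod_of_nonneg fun i _ => (Real.exp_pos _).le]
  have hindep : iIndepFun (fun i (y : ι → ℝ) => ENNReal.ofReal (Real.exp (b i * y i)))
      (Measure.pi fun _ : ι => gaussianReal 0 1) :=
    iIndepFun_pi (X := fun i t => ENNReal.ofReal (Real.exp (b i * t))) fun _ => by fun_prop
  simp_rw [hprod]
  rw [lintegral_prod_eq_prod_lintegral_of_indepFun _ _ hindep fun _ => by fun_prop]
  have hcoord : ∀ i, ∫⁻ y, ENNReal.ofReal (Real.exp (b i * y i))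
      ∂(Measure.pi fun _ : ι => gaussianReal 0 1) = ENNReal.ofReal (Real.exp (b i ^ 2 / 2)) :=
    fun i => by
      rw [(measurePreserving_eval (fun _ : ι => gaussianReal 0 1) i).lintegral_comp
        (f := fun t => ENNReal.ofReal (Real.exp (b i * t))) (by fun_prop),
        lintegral_exp_mul_gaussianReal]
      simp
  simp_rw [hcoord]
  rw [← ENNReal.ofReal_prod_of_nonneg fun i _ => (Real.exp_pos _).le, ← Real.exp_sum,
    dotProduct, Finset.sum_div]
  simp only [sq]

/-- Conditionally on `Z = z`, `√z (t ⬝ᵥ N)` is centred Gaussian with variance `z (t ⬝ᵥ t)`. -/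
lemma lintegral_exp_normalVarianceMixture {Ω ι : Type*} [MeasurableSpace Ω] [Fintype ι]
    {P : Measure Ω} [IsProbabilityMeasure P] {Z : Ω → ℝ} {N : Ω → ι → ℝ}
    (hZ : Measurable Z) (hN : Measurable N) (hZpos : ∀ ω, 0 ≤ Z ω)
    (hNlaw : Measure.map N P = Measure.pi fun _ : ι => gaussianReal 0 1)
    (hindep : IndepFun Z N P) (β : ℝ) (t : ι → ℝ) :
    ∫⁻ ω, ENNReal.ofReal (Real.exp (β * Z ω + Real.sqrt (Z ω) * (t ⬝ᵥ N ω))) ∂P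
      = ∫⁻ ω, ENNReal.ofReal (Real.exp ((β + t ⬝ᵥ t / 2) * Z ω)) ∂P := by
  have hmap : Measure.map (fun ω => (Z ω, N ω)) P = (Measure.map Z P).prod (Measure.map N P) :=
    (indepFun_iff_map_prod_eq_prod_map_map hZ.aemeasurable hN.aemeasurable).mp hindep
  have hZae : ∀ᵐ z ∂(Measure.map Z P), 0 ≤ z := by
    rw [ae_map_iff hZ.aemeasurable measurableSet_Ici]
    exact ae_of_all _ hZpos
  have hinner : ∀ z, 0 ≤ z →
      ∫⁻ n, ENNReal.ofReal (Real.exp (β * z + Real.sqrt z * (t ⬝ᵥ n))) ∂(Measure.map N P)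
        = ENNReal.ofReal (Real.exp ((β + t ⬝ᵥ t / 2) * z)) := fun z hz => by
    have hsplit : ∀ n : ι → ℝ, ENNReal.ofReal (Real.exp (β * z + Real.sqrt z * (t ⬝ᵥ n)))
        = ENNReal.ofReal (Real.exp (β * z)) *
          ENNReal.ofReal (Real.exp ((Real.sqrt z • t) ⬝ᵥ n)) := fun n => by
      rw [← ENNReal.ofReal_mul (Real.exp_nonneg _), ← Real.exp_add, smul_dotProduct, smul_eq_mul]
    simp_rw [hsplit]
    rw [lintegral_const_mul _ (by fun_prop), hNlaw, lintegral_exp_dotProduct_pi_gaussianReal,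
      ← ENNReal.ofReal_mul (Real.exp_nonneg _), ← Real.exp_add, smul_dotProduct, dotProduct_smul,
      smul_eq_mul, smul_eq_mul, ← mul_assoc, Real.mul_self_sqrt hz]
    ring_nf
  have hF : Measurable fun p : ℝ × (ι → ℝ) =>
      ENNReal.ofReal (Real.exp (β * p.1 + Real.sqrt p.1 * (t ⬝ᵥ p.2))) := by
    simp only [dotProduct]
    fun_prop
  calc ∫⁻ ω, ENNReal.ofReal (Real.exp (β * Z ω + Real.sqrt (Z ω) * (t ⬝ᵥ N ω))) ∂P
      = ∫⁻ p, ENNReal.ofReal (Real.exp (β * p.1 + Real.sqrt p.1 * (t ⬝ᵥ p.2)))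
          ∂(Measure.map (fun ω => (Z ω, N ω)) P) :=
        (lintegral_map hF (hZ.prodMk hN)).symm
    _ = ∫⁻ z, ENNReal.ofReal (Real.exp ((β + t ⬝ᵥ t / 2) * z)) ∂(Measure.map Z P) := by
        rw [hmap, lintegral_prod _ hF.aemeasurable]
        exact lintegral_congr_ae (hZae.mono hinner)
    _ = ∫⁻ ω, ENNReal.ofReal (Real.exp ((β + t ⬝ᵥ t / 2) * Z ω)) ∂P :=
        lintegral_map (by fun_prop) hZ

lemma neg_mul_wealth_eq {Ω : Type*} {d : ℕ} (μ γ : Fin d → ℝ) (A : Matrix (Fin d) (Fin d) ℝ)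
    (Z : Ω → ℝ) (N : Ω → Fin d → ℝ) (rf W0 a : ℝ) (x : Fin d → ℝ) (ω : Ω) :
    -(a * wealth μ γ A Z N rf W0 x ω)
      = (-(a * W0 * (1 + rf)) - a * W0 * (x ⬝ᵥ fun i => μ i - rf))
        + (-(a * W0 * (x ⬝ᵥ γ)) * Z ω + Real.sqrt (Z ω) * ((-(a * W0) • (x ᵥ* A)) ⬝ᵥ N ω)) := by
  have hsum : ∑ i, x i * (nmvmX μ γ A Z N ω i - rf)
      = (x ⬝ᵥ fun i => μ i - rf) + (x ⬝ᵥ γ) * Z ω + Real.sqrt (Z ω) * (x ⬝ᵥ (A *ᵥ N ω)) := by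
    simp only [nmvmX, dotProduct, Finset.sum_mul, Finset.mul_sum, ← Finset.sum_add_distrib]
    exact Finset.sum_congr rfl fun i _ => by ring
  rw [wealth, hsum, smul_dotProduct, ← dotProduct_mulVec, smul_eq_mul]
  ring

lemma lintegral_exp_neg_mul_wealth {Ω : Type*} [MeasurableSpace Ω] (P : Measure Ω)
    [IsProbabilityMeasure P] {d : ℕ} (μ γ : Fin d → ℝ) (A : Matrix (Fin d) (Fin d) ℝ)
    {Z : Ω → ℝ} {N : Ω → Fin d → ℝ} (hZ : Measurable Z) (hN : Measurable N)
    (hZpos : ∀ ω, 0 ≤ Z ω)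
    (hNlaw : Measure.map N P = Measure.pi fun _ : Fin d => gaussianReal 0 1)
    (hindep : IndepFun Z N P) (rf W0 a : ℝ) (x : Fin d → ℝ) :
    ∫⁻ ω, ENNReal.ofReal (Real.exp (-(a * wealth μ γ A Z N rf W0 x ω))) ∂P
      = laplaceObjective (A * Aᵀ) γ (fun i => μ i - rf) (a * W0) (-(a * W0 * (1 + rf)))
          (laplaceZ P Z) x := by
  have hsplit : ∀ ω, ENNReal.ofReal (Real.exp (-(a * wealth μ γ A Z N rf W0 x ω)))
      = ENNReal.ofReal (Real.exp (-(a * W0 * (1 + rf)) - a * W0 * (x ⬝ᵥ fun i => μ i - rf))) *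
        ENNReal.ofReal (Real.exp (-(a * W0 * (x ⬝ᵥ γ)) * Z ω
          + Real.sqrt (Z ω) * ((-(a * W0) • (x ᵥ* A)) ⬝ᵥ N ω))) := fun ω => by
    rw [neg_mul_wealth_eq, Real.exp_add, ENNReal.ofReal_mul (Real.exp_nonneg _)]
  simp_rw [hsplit]
  rw [lintegral_const_mul _ (by fun_prop), lintegral_exp_normalVarianceMixture hZ hN hZpos hNlaw
    hindep, laplaceObjective, laplaceZ]
  have hvar : (-(a * W0) • (x ᵥ* A)) ⬝ᵥ (-(a * W0) • (x ᵥ* A))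
      = (a * W0) ^ 2 * (x ⬝ᵥ ((A * Aᵀ) *ᵥ x)) := by
    rw [← mulVec_mulVec, dotProduct_mulVec, mulVec_transpose, smul_dotProduct, dotProduct_smul,
      smul_eq_mul, smul_eq_mul]
    ring
  simp_rw [hvar]
  ring_nf

lemma eexp_neg_of_nonneg {Ω : Type*} [MeasurableSpace Ω] (P : Measure Ω) {f : Ω → ℝ}
    (hf : ∀ ω, 0 ≤ f ω) :
    eexp P (fun ω => -f ω) = -((∫⁻ ω, ENNReal.ofReal (f ω) ∂P : ℝ≥0∞) : EReal) := by
  simp [eexp, ENNReal.ofReal_of_nonpos, hf]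

lemma expUtil_eq_neg_laplaceObjective {Ω : Type*} [MeasurableSpace Ω] (P : Measure Ω)
    [IsProbabilityMeasure P] {d : ℕ} (μ γ : Fin d → ℝ) (A : Matrix (Fin d) (Fin d) ℝ)
    {Z : Ω → ℝ} {N : Ω → Fin d → ℝ} (hZ : Measurable Z) (hN : Measurable N)
    (hZpos : ∀ ω, 0 ≤ Z ω)
    (hNlaw : Measure.map N P = Measure.pi fun _ : Fin d => gaussianReal 0 1)
    (hindep : IndepFun Z N P) (rf W0 a : ℝ) (x : Fin d → ℝ) :
    expUtil P μ γ A Z N rf W0 a x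
      = -(laplaceObjective (A * Aᵀ) γ (fun i => μ i - rf) (a * W0) (-(a * W0 * (1 + rf)))
          (laplaceZ P Z) x : EReal) := by
  rw [expUtil, eexp_neg_of_nonneg P fun _ => (Real.exp_pos _).le,
    lintegral_exp_neg_mul_wealth P μ γ A hZ hN hZpos hNlaw hindep]

theorem stmt1_general {Ω : Type*} [MeasurableSpace Ω] (P : Measure Ω) [IsProbabilityMeasure P]
    {d : ℕ} (μ γ : Fin d → ℝ) (A : Matrix (Fin d) (Fin d) ℝ)
    (Z : Ω → ℝ) (N : Ω → Fin d → ℝ)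
    (hZmeas : Measurable Z) (hNmeas : Measurable N)
    (hZpos : ∀ ω, 0 ≤ Z ω)
    (hNlaw : Measure.map N P = Measure.pi fun _ : Fin d => gaussianReal 0 1)
    (hindep : IndepFun Z N P)
    (hPD : (A * Aᵀ).PosDef)
    (rf W0 : ℝ) (hW0 : 0 < W0)
    (hμrf : (fun i => μ i - rf) ≠ 0)
    (a : ℝ) (ha : 0 < a)
    -- the critical value ŝ of the Laplace transform of Z
    (sHat : EReal)
    (hsHat_fin : ∀ s : ℝ, sHat < (s : EReal) → laplaceZ P Z s ≠ ⊤)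
    (hsHat_inf : ∀ s : ℝ, (s : EReal) < sHat → laplaceZ P Z s = ⊤)
    (D : Set (Fin d → ℝ))
    (x₀ : Fin d → ℝ) (hx₀D : x₀ ∈ D) (hx₀int : x₀ ∈ interior D)
    (hfin : ⊥ < expUtil P μ γ A Z N rf W0 a x₀)
    (hopt : ∀ x ∈ D, expUtil P μ γ A Z N rf W0 a x ≤ expUtil P μ γ A Z N rf W0 a x₀) :
    ∃ qd ∈ {q : ℝ | ∃ c ∈ {c : ℝ | ∃ x ∈ D, x ⬝ᵥ (fun i => μ i - rf) = c},
        q = (γ ⬝ᵥ ((A * Aᵀ)⁻¹ *ᵥ fun i => μ i - rf) - a * W0 * c) /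
            ((fun i => μ i - rf) ⬝ᵥ ((A * Aᵀ)⁻¹ *ᵥ fun i => μ i - rf))} ∩
      ThetaSet P Z sHat (γ ⬝ᵥ ((A * Aᵀ)⁻¹ *ᵥ γ))
        ((fun i => μ i - rf) ⬝ᵥ ((A * Aᵀ)⁻¹ *ᵥ fun i => μ i - rf)),
      (∀ θ ∈ {q : ℝ | ∃ c ∈ {c : ℝ | ∃ x ∈ D, x ⬝ᵥ (fun i => μ i - rf) = c},
          q = (γ ⬝ᵥ ((A * Aᵀ)⁻¹ *ᵥ fun i => μ i - rf) - a * W0 * c) /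
              ((fun i => μ i - rf) ⬝ᵥ ((A * Aᵀ)⁻¹ *ᵥ fun i => μ i - rf))} ∩
        ThetaSet P Z sHat (γ ⬝ᵥ ((A * Aᵀ)⁻¹ *ᵥ γ))
          ((fun i => μ i - rf) ⬝ᵥ ((A * Aᵀ)⁻¹ *ᵥ fun i => μ i - rf)),
        Qfun P Z (γ ⬝ᵥ ((A * Aᵀ)⁻¹ *ᵥ γ))
            ((fun i => μ i - rf) ⬝ᵥ ((A * Aᵀ)⁻¹ *ᵥ fun i => μ i - rf)) qd ≤
          Qfun P Z (γ ⬝ᵥ ((A * Aᵀ)⁻¹ *ᵥ γ))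
            ((fun i => μ i - rf) ⬝ᵥ ((A * Aᵀ)⁻¹ *ᵥ fun i => μ i - rf)) θ) ∧
      x₀ = (1 / (a * W0)) •
        ((A * Aᵀ)⁻¹ *ᵥ γ - qd • ((A * Aᵀ)⁻¹ *ᵥ fun i => μ i - rf)) := by
  have hEU := expUtil_eq_neg_laplaceObjective P μ γ A hZmeas hNmeas hZpos hNlaw hindep rf W0 a
  set m : Fin d → ℝ := fun i => μ i - rf
  set J := laplaceObjective (A * Aᵀ) γ m (a * W0) (-(a * W0 * (1 + rf))) (laplaceZ P Z) with hJ
  have hk : 0 < a * W0 := mul_pos ha hW0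
  have hSsymm : (A * Aᵀ).IsSymm := isSymm_mul_transpose_self A
  have hdet : IsUnit (A * Aᵀ).det := (isUnit_iff_isUnit_det _).mp hPD.isUnit
  have hC : 0 < m ⬝ᵥ ((A * Aᵀ)⁻¹ *ᵥ m) := by simpa using hPD.inv.dotProduct_mulVec_pos hμrf
  have hmin : IsLocalMin J x₀ :=
    IsMinOn.isLocalMin (fun x hx => by simpa [hEU] using hopt x hx)
      (mem_interior_iff_mem_nhds.mp hx₀int)
  have hJfin : J x₀ ≠ ⊤ := fun htop => by simp [hEU, htop] at hfin
  have hZ0 : P {ω | 0 < Z ω} ≠ 0 := fun h0 =>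
    not_isLocalMin_laplaceObjective_of_eq_one hk hμrf (laplaceZ_eq_one P hZpos h0) x₀ hmin
  have hx₀ := eq_linePortfolio_of_isLocalMin hPD hk.ne' hμrf
    (fun _ _ h => laplaceZ_lt_laplaceZ P hZmeas hZpos hZ0 h) hmin hJfin
  set qd := (γ ⬝ᵥ ((A * Aᵀ)⁻¹ *ᵥ m) - a * W0 * (x₀ ⬝ᵥ m)) / (m ⬝ᵥ ((A * Aᵀ)⁻¹ *ᵥ m))
  rw [hx₀, hJ, laplaceObjective_linePortfolio hSsymm hdet hk.ne'] at hJfin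
  have hQfin : QfunENNReal P Z (γ ⬝ᵥ ((A * Aᵀ)⁻¹ *ᵥ γ)) (m ⬝ᵥ ((A * Aᵀ)⁻¹ *ᵥ m)) qd ≠ ⊤ :=
    ENNReal.ne_top_of_mul_ne_top_right hJfin (by positivity)
  refine ⟨qd, ⟨⟨x₀ ⬝ᵥ m, ⟨x₀, hx₀D, rfl⟩, rfl⟩, mem_ThetaSet_of_laplaceZ_ne_top P hsHat_inf
      (ENNReal.ne_top_of_mul_ne_top_right hQfin (by positivity))⟩,
    fun θ hθ => isMinOn_Qfun_of_isLocalMin P hZmeas hZpos hC.le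
      (isLocalMin_of_isLocalMin_linePortfolio hSsymm hdet hk.ne' (hx₀ ▸ hmin)) hQfin
      (ENNReal.mul_ne_top ENNReal.ofReal_ne_top (laplaceZ_ne_top_of_mem_ThetaSet P hsHat_fin hθ.2)),
    hx₀⟩

/-- if the solution `x₀` of the exponential-utility problem on a closed convex
domain `D` lies in the interior of `D`, then
`x₀ = (1/(aW₀))[Σ⁻¹γ − q_d Σ⁻¹(μ − 𝟏 r_f)]` where `q_d` minimizes `Q` over `D̄_q`. -/
theorem stmt1 {Ω : Type*} [MeasurableSpace Ω] (P : Measure Ω) [IsProbabilityMeasure P]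
    {d : ℕ} (μ γ : Fin d → ℝ) (A : Matrix (Fin d) (Fin d) ℝ)
    (Z : Ω → ℝ) (N : Ω → Fin d → ℝ)
    (hZmeas : Measurable Z) (hNmeas : Measurable N)
    (hZpos : ∀ ω, 0 ≤ Z ω)
    (hNlaw : Measure.map N P = Measure.pi fun _ : Fin d => gaussianReal 0 1)
    (hindep : IndepFun Z N P)
    (hPD : (A * Aᵀ).PosDef)
    (rf W0 : ℝ) (hW0 : 0 < W0)
    (hμrf : (fun i => μ i - rf) ≠ 0)
    (a : ℝ) (ha : 0 < a)
    -- the critical value ŝ of the Laplace transform of Z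
    (sHat : EReal) (hsHat_le : sHat ≤ 0)
    (hsHat_fin : ∀ s : ℝ, sHat < (s : EReal) → laplaceZ P Z s ≠ ⊤)
    (hsHat_inf : ∀ s : ℝ, (s : EReal) < sHat → laplaceZ P Z s = ⊤)
    -- Assume 𝒜 ≠ 0 or ŝ ≠ 0
    (hAs : γ ⬝ᵥ ((A * Aᵀ)⁻¹ *ᵥ γ) ≠ 0 ∨ sHat ≠ 0)
    (D : Set (Fin d → ℝ)) (hDclosed : IsClosed D) (hDconvex : Convex ℝ D)
    (x₀ : Fin d → ℝ) (hx₀D : x₀ ∈ D) (hx₀int : x₀ ∈ interior D)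
    (hfin : ⊥ < expUtil P μ γ A Z N rf W0 a x₀)
    (hopt : ∀ x ∈ D, expUtil P μ γ A Z N rf W0 a x ≤ expUtil P μ γ A Z N rf W0 a x₀) :
    ∃ qd ∈ {q : ℝ | ∃ c ∈ {c : ℝ | ∃ x ∈ D, x ⬝ᵥ (fun i => μ i - rf) = c},
        q = (γ ⬝ᵥ ((A * Aᵀ)⁻¹ *ᵥ fun i => μ i - rf) - a * W0 * c) /
            ((fun i => μ i - rf) ⬝ᵥ ((A * Aᵀ)⁻¹ *ᵥ fun i => μ i - rf))} ∩
      ThetaSet P Z sHat (γ ⬝ᵥ ((A * Aᵀ)⁻¹ *ᵥ γ))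
        ((fun i => μ i - rf) ⬝ᵥ ((A * Aᵀ)⁻¹ *ᵥ fun i => μ i - rf)),
      (∀ θ ∈ {q : ℝ | ∃ c ∈ {c : ℝ | ∃ x ∈ D, x ⬝ᵥ (fun i => μ i - rf) = c},
          q = (γ ⬝ᵥ ((A * Aᵀ)⁻¹ *ᵥ fun i => μ i - rf) - a * W0 * c) /
              ((fun i => μ i - rf) ⬝ᵥ ((A * Aᵀ)⁻¹ *ᵥ fun i => μ i - rf))} ∩
        ThetaSet P Z sHat (γ ⬝ᵥ ((A * Aᵀ)⁻¹ *ᵥ γ))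
          ((fun i => μ i - rf) ⬝ᵥ ((A * Aᵀ)⁻¹ *ᵥ fun i => μ i - rf)),
        Qfun P Z (γ ⬝ᵥ ((A * Aᵀ)⁻¹ *ᵥ γ))
            ((fun i => μ i - rf) ⬝ᵥ ((A * Aᵀ)⁻¹ *ᵥ fun i => μ i - rf)) qd ≤
          Qfun P Z (γ ⬝ᵥ ((A * Aᵀ)⁻¹ *ᵥ γ))
            ((fun i => μ i - rf) ⬝ᵥ ((A * Aᵀ)⁻¹ *ᵥ fun i => μ i - rf)) θ) ∧
      x₀ = (1 / (a * W0)) •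
        ((A * Aᵀ)⁻¹ *ᵥ γ - qd • ((A * Aᵀ)⁻¹ *ᵥ fun i => μ i - rf)) :=
  stmt1_general P μ γ A Z N hZmeas hNmeas hZpos hNlaw hindep hPD rf W0 hW0 hμrf a ha sHat hsHat_fin
    hsHat_inf D x₀ hx₀D hx₀int hfin hopt

end
end

section
/- If m > 2W₀, then sup_{x∈ℝ} E[U(W(x))] = m/2, while E[U(W(x))] < m/2 for every finite x ∈ ℝ; in particular the supremum is not attained by any portfolio of finite size. Moreover, for x > 0 the function G(x) = E[U(W(x))] satisfies G'(x) = (W₀/√(2π))·e^{−1/(2x²)}·[1 − e^{(m/(x²W₀))(1 − m/(2W₀))}] > 0, so G is strictly increasing on (0,∞), and lim_{x→+∞} G(x) = m/2. -/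
/-!
Through the standard normal density `φ` and cdf `Φ`, for `b > 0` the expectation
`E[U(a + bN)]` splits at the points `-a/b` and `(m - a)/b` where `a + bt` leaves `[0, m]`;
as `φ' = -tφ`, the middle piece integrates in closed form, `E[U(a + bN)] =`
`a (Φ((m-a)/b) - Φ(-a/b)) - b (φ((m-a)/b) - φ(-a/b)) + m (1 - Φ((m-a)/b))`.
Differentiating in `b`, everything cancels except `φ(-a/b) - φ((m-a)/b)`, which for `a = W₀`,
`b = xW₀` is positive exactly when `m > 2W₀`. As `b → ∞` both cdf terms tend to `Φ(0) = 1/2`,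
and `b (φ(c/b) - φ(0)) → 0` because `φ'(0) = 0`; hence `G(x) → m/2`. Since `G` is even and
`G(0) = W₀ < m/2`, strict monotonicity on `(0, ∞)` gives `G < m/2` everywhere.
-/

open MeasureTheory ProbabilityTheory Filter
open scoped ENNReal NNReal Topology

noncomputable section

/-- The truncated utility: `U(w) = m` for `w ≥ m`, `U(w) = w` for `0 ≤ w ≤ m`,
`U(w) = 0` for `w ≤ 0`. -/
def U4 (m w : ℝ) : ℝ := max 0 (min w m)

/-- Expected utility `G(x) = E[U(W₀ + x W₀ N)]`. -/
def G4 {Ω : Type*} [MeasurableSpace Ω] (P : Measure Ω) (N : Ω → ℝ) (W0 m : ℝ)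
    (x : ℝ) : ℝ :=
  ∫ ω, U4 m (W0 + x * W0 * N ω) ∂P

open Set Real

def stdNormalPDF (t : ℝ) : ℝ := (√(2 * π))⁻¹ * exp (-t ^ 2 / 2)

def stdNormalCDF (t : ℝ) : ℝ := ∫ u in Iic t, stdNormalPDF u

local notation "φ" => stdNormalPDF
local notation "Φ" => stdNormalCDF

lemma stdNormalPDF_eq_gaussianPDFReal : φ = gaussianPDFReal 0 1 := by
  funext t
  simp [stdNormalPDF, gaussianPDFReal]

lemma stdNormalPDF_neg (t : ℝ) : φ (-t) = φ t := by
  simp [stdNormalPDF]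

lemma stdNormalPDF_lt_of_sq_lt {s t : ℝ} (h : s ^ 2 < t ^ 2) : φ t < φ s := by
  unfold stdNormalPDF
  gcongr

lemma continuous_stdNormalPDF : Continuous φ := by
  unfold stdNormalPDF
  fun_prop

lemma integrable_stdNormalPDF : Integrable φ :=
  stdNormalPDF_eq_gaussianPDFReal ▸ integrable_gaussianPDFReal 0 1

lemma integral_stdNormalPDF : ∫ t, φ t = 1 :=
  stdNormalPDF_eq_gaussianPDFReal ▸ integral_gaussianPDFReal_eq_one 0 one_ne_zero

lemma hasDerivAt_stdNormalPDF (t : ℝ) : HasDerivAt φ (-t * φ t) t := by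
  have hexponent : HasDerivAt (fun u : ℝ => -u ^ 2 / 2) (-t) t :=
    ((hasDerivAt_pow 2 t).neg.div_const 2).congr_deriv (by ring)
  exact (hexponent.exp.const_mul (√(2 * π))⁻¹).congr_deriv (by simp only [stdNormalPDF]; ring)

lemma hasDerivAt_stdNormalCDF (t : ℝ) : HasDerivAt Φ (φ t) t := by
  have hΦ : Φ = fun s => Φ 0 + ∫ u in (0 : ℝ)..s, φ u := by
    funext s
    rw [← intervalIntegral.integral_Iic_sub_Iic integrable_stdNormalPDF.integrableOn
      integrable_stdNormalPDF.integrableOn]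
    simp only [stdNormalCDF]
    ring
  rw [hΦ]
  exact (intervalIntegral.integral_hasDerivAt_right
    (continuous_stdNormalPDF.intervalIntegrable 0 t)
    (continuous_stdNormalPDF.stronglyMeasurableAtFilter volume _)
    continuous_stdNormalPDF.continuousAt).const_add _

lemma continuous_stdNormalCDF : Continuous Φ :=
  continuous_iff_continuousAt.2 fun t => (hasDerivAt_stdNormalCDF t).continuousAt

lemma integral_Ioi_stdNormalPDF (b : ℝ) : ∫ t in Ioi b, φ t = 1 - Φ b := by
  have h := intervalIntegral.integral_Iic_add_Ioi (b := b) integrable_stdNormalPDF.integrableOn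
    integrable_stdNormalPDF.integrableOn
  rw [integral_stdNormalPDF] at h
  rw [stdNormalCDF]
  linarith

lemma stdNormalCDF_zero : Φ 0 = 1 / 2 := by
  have h : Φ 0 = ∫ t in Ioi 0, φ t := by
    simpa [stdNormalCDF, stdNormalPDF_neg] using integral_comp_neg_Iic 0 φ
  rw [integral_Ioi_stdNormalPDF] at h
  linarith

lemma integral_stdNormalPDF_mul_comp_neg (f : ℝ → ℝ) :
    ∫ t, φ t * f (-t) = ∫ t, φ t * f t := by
  simpa [stdNormalPDF_neg] using integral_neg_eq_self (fun t => φ t * f t) volume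

lemma intervalIntegral_stdNormalPDF_mul_affine (a b α β : ℝ) :
    ∫ t in α..β, φ t * (a + b * t) = a * (Φ β - Φ α) - b * (φ β - φ α) := by
  rw [intervalIntegral.integral_eq_sub_of_hasDerivAt (f := fun t => a * Φ t - b * φ t)]
  · ring
  · intro t _
    exact (((hasDerivAt_stdNormalCDF t).const_mul a).sub
      ((hasDerivAt_stdNormalPDF t).const_mul b)).congr_deriv (by ring)
  · exact (continuous_stdNormalPDF.mul (by fun_prop)).intervalIntegrable α β

lemma tendsto_mul_sub_of_hasDerivAt_zero {f : ℝ → ℝ} (hf : HasDerivAt f 0 0) (c : ℝ) :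
    Tendsto (fun b => b * (f (c / b) - f 0)) atTop (𝓝 0) := by
  have hc : Tendsto (fun b : ℝ => c / b) atTop (𝓝 0) := tendsto_const_nhds.div_atTop tendsto_id
  have ho : (fun b => f (c / b) - f 0) =o[atTop] fun b => c / b := by
    simpa [Function.comp_def] using hf.isLittleO.comp_tendsto hc
  have hO : (fun b : ℝ => c / b) =O[atTop] fun b => b⁻¹ := by
    simpa [div_eq_mul_inv] using Asymptotics.isBigO_const_mul_self c (fun b : ℝ => b⁻¹) atTop
  simpa [div_inv_eq_mul, mul_comm] using (ho.trans_isBigO hO).tendsto_div_nhds_zero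

lemma continuous_U4 (m : ℝ) : Continuous (U4 m) :=
  continuous_const.max (continuous_id.min continuous_const)

lemma abs_U4_le {m : ℝ} (hm : 0 ≤ m) (w : ℝ) : |U4 m w| ≤ m :=
  abs_le.2 ⟨(neg_nonpos.2 hm).trans (le_max_left _ _), max_le hm (min_le_right _ _)⟩

lemma U4_of_nonpos {m w : ℝ} (hw : w ≤ 0) : U4 m w = 0 :=
  max_eq_left ((min_le_left w m).trans hw)

lemma U4_of_le {m w : ℝ} (hm : 0 ≤ m) (hw : m ≤ w) : U4 m w = m := by
  rw [U4, min_eq_right hw, max_eq_right hm]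

lemma U4_of_mem_Icc {m w : ℝ} (hw : w ∈ Icc 0 m) : U4 m w = w := by
  rw [U4, min_eq_left hw.2, max_eq_right hw.1]

def meanU4Normal (m a b : ℝ) : ℝ :=
  a * (Φ ((m - a) / b) - Φ (-a / b)) - b * (φ ((m - a) / b) - φ (-a / b))
    + m * (1 - Φ ((m - a) / b))

lemma integral_stdNormalPDF_mul_U4 {m : ℝ} (hm : 0 ≤ m) (a : ℝ) {b : ℝ} (hb : 0 < b) :
    ∫ t, φ t * U4 m (a + b * t) = meanU4Normal m a b := by
  set α := -a / b
  set β := (m - a) / b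
  set g := fun t => φ t * U4 m (a + b * t)
  have hg : Integrable g := integrable_stdNormalPDF.mul_bdd
    ((continuous_U4 m).comp (by fun_prop)).aestronglyMeasurable
    (ae_of_all _ fun t => abs_U4_le hm _)
  have hαβ : α ≤ β := div_le_div_of_nonneg_right (by linarith) hb.le
  have hsplit :
      ∫ t, g t = (∫ t in Iic α, g t) + ((∫ t in Ioc α β, g t) + ∫ t in Ioi β, g t) := by
    rw [← setIntegral_union (Ioc_disjoint_Ioi le_rfl) measurableSet_Ioi hg.integrableOn
      hg.integrableOn, Ioc_union_Ioi_eq_Ioi hαβ,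
      intervalIntegral.integral_Iic_add_Ioi hg.integrableOn hg.integrableOn]
  have hleft : ∫ t in Iic α, g t = 0 := by
    refine setIntegral_eq_zero_of_forall_eq_zero fun t (ht : t ≤ α) => ?_
    have : t * b ≤ -a := (le_div_iff₀ hb).1 ht
    simp [g, U4_of_nonpos (show a + b * t ≤ 0 by linarith)]
  have hmiddle : ∫ t in Ioc α β, g t = a * (Φ β - Φ α) - b * (φ β - φ α) := by
    rw [← intervalIntegral_stdNormalPDF_mul_affine, intervalIntegral.integral_of_le hαβ]
    refine setIntegral_congr_fun measurableSet_Ioc fun t ⟨hαt, htβ⟩ => ?_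
    have h₁ : -a < t * b := (div_lt_iff₀ hb).1 hαt
    have h₂ : t * b ≤ m - a := (le_div_iff₀ hb).1 htβ
    simp only [g, U4_of_mem_Icc (show a + b * t ∈ Icc 0 m from ⟨by linarith, by linarith⟩)]
  have hright : ∫ t in Ioi β, g t = m * (1 - Φ β) := by
    rw [← integral_Ioi_stdNormalPDF, ← integral_const_mul]
    refine setIntegral_congr_fun measurableSet_Ioi fun t (ht : β < t) => ?_
    have : m - a < t * b := (div_lt_iff₀ hb).1 ht
    simp only [g, U4_of_le hm (show m ≤ a + b * t by linarith), mul_comm]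
  rw [hsplit, hleft, hmiddle, hright, meanU4Normal]
  ring

lemma hasDerivAt_meanU4Normal (m a : ℝ) {b : ℝ} (hb : 0 < b) :
    HasDerivAt (meanU4Normal m a) (φ (-a / b) - φ ((m - a) / b)) b := by
  have hquot (c : ℝ) : HasDerivAt (fun y => c / y) (-c / b ^ 2) b := by
    simpa [div_eq_mul_inv, neg_div] using (hasDerivAt_inv hb.ne').const_mul c
  have hΦα := (hasDerivAt_stdNormalCDF _).comp b (hquot (-a))
  have hΦβ := (hasDerivAt_stdNormalCDF _).comp b (hquot (m - a))
  have hφα := (hasDerivAt_stdNormalPDF _).comp b (hquot (-a))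
  have hφβ := (hasDerivAt_stdNormalPDF _).comp b (hquot (m - a))
  have h := (((hΦβ.sub hΦα).const_mul a).sub ((hasDerivAt_id b).mul (hφβ.sub hφα))).add
    ((hΦβ.const_sub 1).const_mul m)
  refine h.congr_deriv ?_
  simp only [Function.comp_apply, Pi.sub_apply, id]
  field_simp
  ring

lemma tendsto_meanU4Normal_atTop (m a : ℝ) : Tendsto (meanU4Normal m a) atTop (𝓝 (m / 2)) := by
  have hΦ (c : ℝ) : Tendsto (fun b => Φ (c / b)) atTop (𝓝 (1 / 2)) :=
    stdNormalCDF_zero ▸ (continuous_stdNormalCDF.tendsto 0).comp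
      (tendsto_const_nhds.div_atTop tendsto_id)
  have hφ := tendsto_mul_sub_of_hasDerivAt_zero (by simpa using hasDerivAt_stdNormalPDF 0)
  have h := ((((hΦ (m - a)).sub (hΦ (-a))).const_mul a).sub ((hφ (m - a)).sub (hφ (-a)))).add
    (((hΦ (m - a)).const_sub 1).const_mul m)
  convert h using 2 with b
  · simp only [meanU4Normal]
    ring
  · ring

lemma stdNormalPDF_sub_stdNormalPDF_mul_eq {W0 x : ℝ} (hW0 : W0 ≠ 0) (hx : x ≠ 0) (m : ℝ) :
    (φ (-W0 / (x * W0)) - φ ((m - W0) / (x * W0))) * W0 =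
      W0 / √(2 * π) * exp (-(1 / (2 * x ^ 2))) *
        (1 - exp (m / (x ^ 2 * W0) * (1 - m / (2 * W0)))) := by
  have hα : -(-W0 / (x * W0)) ^ 2 / 2 = -(1 / (2 * x ^ 2)) := by
    field_simp
  have hβ : -((m - W0) / (x * W0)) ^ 2 / 2 =
      -(1 / (2 * x ^ 2)) + m / (x ^ 2 * W0) * (1 - m / (2 * W0)) := by
    field_simp
    ring
  simp only [stdNormalPDF, hα, hβ, exp_add]
  ring

lemma stdNormalPDF_div_lt {W0 m x : ℝ} (hW0 : 0 < W0) (hm : 2 * W0 < m) (hx : x ≠ 0) :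
    φ ((m - W0) / (x * W0)) < φ (-W0 / (x * W0)) := by
  refine stdNormalPDF_lt_of_sq_lt ?_
  rw [div_pow, div_pow]
  exact div_lt_div_of_pos_right (by nlinarith) (by positivity)

lemma integral_comp_eq_integral_stdNormalPDF_mul {Ω : Type*} [MeasurableSpace Ω] {P : Measure Ω}
    {N : Ω → ℝ} (hN : Measurable N) (hlaw : P.map N = gaussianReal 0 1) {f : ℝ → ℝ}
    (hf : Measurable f) : ∫ ω, f (N ω) ∂P = ∫ t, φ t * f t := by
  rw [← integral_map hN.aemeasurable hf.aestronglyMeasurable, hlaw,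
    integral_gaussianReal_eq_integral_smul one_ne_zero, stdNormalPDF_eq_gaussianPDFReal]
  rfl

section ExpectedUtility

variable {Ω : Type*} [MeasurableSpace Ω] {P : Measure Ω} {N : Ω → ℝ}

lemma G4_eq_integral (hN : Measurable N) (hlaw : P.map N = gaussianReal 0 1) (W0 m x : ℝ) :
    G4 P N W0 m x = ∫ t, φ t * U4 m (W0 + x * W0 * t) :=
  integral_comp_eq_integral_stdNormalPDF_mul (f := fun t => U4 m (W0 + x * W0 * t)) hN hlaw
    ((continuous_U4 m).comp (by fun_prop)).measurable

lemma G4_neg (hN : Measurable N) (hlaw : P.map N = gaussianReal 0 1) (W0 m x : ℝ) :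
    G4 P N W0 m (-x) = G4 P N W0 m x := by
  rw [G4_eq_integral hN hlaw, G4_eq_integral hN hlaw,
    ← integral_stdNormalPDF_mul_comp_neg]
  simp only [neg_mul, mul_neg, neg_neg]

lemma G4_zero [IsProbabilityMeasure P] (W0 m : ℝ) : G4 P N W0 m 0 = U4 m W0 := by
  simp [G4]

lemma G4_eq_meanU4Normal (hN : Measurable N) (hlaw : P.map N = gaussianReal 0 1) {W0 m x : ℝ}
    (hm : 0 ≤ m) (hb : 0 < x * W0) : G4 P N W0 m x = meanU4Normal m W0 (x * W0) := by
  rw [G4_eq_integral hN hlaw, integral_stdNormalPDF_mul_U4 hm W0 hb]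

lemma hasDerivAt_G4 (hN : Measurable N) (hlaw : P.map N = gaussianReal 0 1) {W0 m x : ℝ}
    (hW0 : 0 < W0) (hm : 0 ≤ m) (hx : 0 < x) :
    HasDerivAt (G4 P N W0 m) ((φ (-W0 / (x * W0)) - φ ((m - W0) / (x * W0))) * W0) x :=
  ((hasDerivAt_meanU4Normal m W0 (by positivity)).comp x (hasDerivAt_mul_const W0))
    |>.congr_of_eventuallyEq <| eventually_of_mem (Ioi_mem_nhds hx) fun y (hy : 0 < y) =>
      G4_eq_meanU4Normal hN hlaw hm (by positivity)

lemma tendsto_G4_atTop (hN : Measurable N) (hlaw : P.map N = gaussianReal 0 1) {W0 m : ℝ}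
    (hW0 : 0 < W0) (hm : 0 ≤ m) : Tendsto (G4 P N W0 m) atTop (𝓝 (m / 2)) :=
  ((tendsto_meanU4Normal_atTop m W0).comp (tendsto_id.atTop_mul_const hW0)).congr' <|
    eventually_of_mem (Ioi_mem_atTop 0) fun x (hx : 0 < x) =>
      (G4_eq_meanU4Normal hN hlaw hm (by positivity)).symm

end ExpectedUtility

lemma StrictMonoOn.lt_of_tendsto_atTop {α β : Type*} [PartialOrder α] [NoMaxOrder α]
    [IsDirected α (· ≤ ·)] [Nonempty α] [TopologicalSpace β] [Preorder β]
    [ClosedIciTopology β] {f : α → β} {a x : α} {L : β}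
    (hf : StrictMonoOn f (Ioi a)) (hlim : Tendsto f atTop (𝓝 L)) (hx : a < x) : f x < L := by
  obtain ⟨y, hxy⟩ := exists_gt x
  have hy : a < y := hx.trans hxy
  refine (hf hx hy hxy).trans_le (ge_of_tendsto hlim ?_)
  filter_upwards [eventually_ge_atTop y] with z hz
  exact hf.monotoneOn hy (hy.trans_le hz) hz

/-- if `m > 2W₀` then `sup_x E[U(W(x))] = m/2`, while `E[U(W(x))] < m/2`
for every finite `x`; moreover for `x > 0` the derivative of `G` is
`(W₀/√(2π)) e^{−1/(2x²)} (1 − e^{(m/(x²W₀))(1 − m/(2W₀))}) > 0`, `G` is strictly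
increasing on `(0,∞)`, and `G(x) → m/2` as `x → +∞`. -/
theorem stmt4 {Ω : Type*} [MeasurableSpace Ω] (P : Measure Ω) [IsProbabilityMeasure P]
    (N : Ω → ℝ) (hNmeas : Measurable N)
    (hNlaw : Measure.map N P = gaussianReal 0 1)
    (W0 m : ℝ) (hW0 : 0 < W0) (hm : 2 * W0 < m) :
    (⨆ x : ℝ, G4 P N W0 m x) = m / 2 ∧
    (∀ x : ℝ, G4 P N W0 m x < m / 2) ∧
    (∀ x : ℝ, 0 < x →
      HasDerivAt (G4 P N W0 m)
        (W0 / Real.sqrt (2 * Real.pi) * Real.exp (-(1 / (2 * x ^ 2))) *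
          (1 - Real.exp (m / (x ^ 2 * W0) * (1 - m / (2 * W0))))) x ∧
      0 < W0 / Real.sqrt (2 * Real.pi) * Real.exp (-(1 / (2 * x ^ 2))) *
          (1 - Real.exp (m / (x ^ 2 * W0) * (1 - m / (2 * W0))))) ∧
    StrictMonoOn (G4 P N W0 m) (Set.Ioi 0) ∧
    Tendsto (G4 P N W0 m) atTop (𝓝 (m / 2)) := by
  have hm0 : 0 ≤ m := by linarith
  have hderiv (x : ℝ) (hx : 0 < x) : HasDerivAt (G4 P N W0 m)
      (W0 / √(2 * π) * exp (-(1 / (2 * x ^ 2))) *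
        (1 - exp (m / (x ^ 2 * W0) * (1 - m / (2 * W0))))) x := by
    rw [← stdNormalPDF_sub_stdNormalPDF_mul_eq hW0.ne' hx.ne']
    exact hasDerivAt_G4 hNmeas hNlaw hW0 hm0 hx
  have hpos (x : ℝ) (hx : 0 < x) : 0 < W0 / √(2 * π) * exp (-(1 / (2 * x ^ 2))) *
      (1 - exp (m / (x ^ 2 * W0) * (1 - m / (2 * W0)))) := by
    rw [← stdNormalPDF_sub_stdNormalPDF_mul_eq hW0.ne' hx.ne']
    exact mul_pos (sub_pos.2 (stdNormalPDF_div_lt hW0 hm hx.ne')) hW0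
  have hmono : StrictMonoOn (G4 P N W0 m) (Ioi 0) :=
    strictMonoOn_of_hasDerivWithinAt_pos (convex_Ioi 0)
      (fun x hx => (hderiv x hx).continuousAt.continuousWithinAt)
      (fun x hx => (hderiv x (by simpa using hx)).hasDerivWithinAt)
      (fun x hx => hpos x (by simpa using hx))
  have hlim := tendsto_G4_atTop hNmeas hNlaw hW0 hm0
  have hlt (x : ℝ) : G4 P N W0 m x < m / 2 := by
    rcases lt_trichotomy 0 x with hx | rfl | hx
    · exact hmono.lt_of_tendsto_atTop hlim hx
    · rw [G4_zero, U4_of_mem_Icc ⟨hW0.le, by linarith⟩]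
      linarith
    · rw [← G4_neg hNmeas hNlaw]
      exact hmono.lt_of_tendsto_atTop hlim (neg_pos.2 hx)
  refine ⟨ciSup_eq_of_forall_le_of_forall_lt_exists_gt (fun x => (hlt x).le)
    fun w hw => (hlim.eventually (lt_mem_nhds hw)).exists, hlt,
    fun x hx => ⟨hderiv x hx, hpos x hx⟩, hmono, hlim⟩

end
end

section
/- For the SAHARA utility U with parameters a > 0, a ≠ 1, b > 0, δ ∈ ℝ: lim_{w→+∞} U(w) = 0 if a > 1 and lim_{w→+∞} U(w) = +∞ if a ∈ (0,1); and lim_{w→−∞} U(w) = −∞ for every a > 0 with a ≠ 1. -/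
open Filter
open scoped Topology

noncomputable section

/-- The SAHARA utility function with risk-aversion `a ≠ 1`, scale `b > 0`, threshold `δ`:
`U(w) = −(1/(a²−1)) ((w−δ) + a√(b²+(w−δ)²)) / ((w−δ) + √(b²+(w−δ)²))^a`. -/
def sahara (a b δ : ℝ) (w : ℝ) : ℝ :=
  -(1 / (a ^ 2 - 1)) *
    (((w - δ) + a * Real.sqrt (b ^ 2 + (w - δ) ^ 2)) /
      ((w - δ) + Real.sqrt (b ^ 2 + (w - δ) ^ 2)) ^ a)

/-!
Substitute `s = x + √(b² + x²)` with `x = w - δ`. Since `(x + √(b² + x²)) (√(b² + x²) - x) = b²`,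
`s` is a positive increasing reparametrisation of the line, with `s → ∞` as `w → ∞` and `s → 0⁺`
as `w → -∞`, and `x = (s - b²/s)/2`, `√(b² + x²) = (s + b²/s)/2`. In this variable
`U = s^(1-a) / (2(1-a)) - b² s^(-(1+a)) / (2(1+a))`, a sum of two powers whose limits are read off
directly; near `0` the term `s^(-(1+a))` dominates.
-/

namespace Real

theorem add_sqrt_add_sq_mul_sqrt_sub {c : ℝ} (hc : 0 ≤ c) (x : ℝ) :
    (x + √(c + x ^ 2)) * (√(c + x ^ 2) - x) = c := by
  have hsq : √(c + x ^ 2) ^ 2 = c + x ^ 2 := sq_sqrt (by positivity)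
  linear_combination hsq

theorem abs_lt_sqrt_add_sq {c : ℝ} (hc : 0 < c) (x : ℝ) : |x| < √(c + x ^ 2) := by
  rw [← sqrt_sq_eq_abs]
  exact sqrt_lt_sqrt (sq_nonneg x) (by linarith)

theorem add_sqrt_add_sq_pos {c : ℝ} (hc : 0 < c) (x : ℝ) : 0 < x + √(c + x ^ 2) := by
  linarith [neg_abs_le x, abs_lt_sqrt_add_sq hc x]

theorem tendsto_add_sqrt_add_sq_atTop (c : ℝ) :
    Tendsto (fun x : ℝ => x + √(c + x ^ 2)) atTop atTop :=
  tendsto_atTop_mono (fun _ => le_add_of_nonneg_right (sqrt_nonneg _)) tendsto_id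

theorem tendsto_add_sqrt_add_sq_atBot {c : ℝ} (hc : 0 < c) :
    Tendsto (fun x : ℝ => x + √(c + x ^ 2)) atBot (𝓝[>] 0) := by
  have hconj : Tendsto (fun x : ℝ => √(c + x ^ 2) - x) atBot atTop :=
    tendsto_atTop_mono (fun x => by linarith [sqrt_nonneg (c + x ^ 2)]) tendsto_neg_atBot_atTop
  refine tendsto_nhdsWithin_of_tendsto_nhds_of_eventually_within _ ?_
    (.of_forall (add_sqrt_add_sq_pos hc))
  refine ((tendsto_const_nhds (x := c)).div_atTop hconj).congr fun x => ?_
  have hpos : 0 < √(c + x ^ 2) - x := by linarith [le_abs_self x, abs_lt_sqrt_add_sq hc x]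
  rw [div_eq_iff hpos.ne', add_sqrt_add_sq_mul_sqrt_sub hc.le]

end Real

open Real

def saharaProfile (a c s : ℝ) : ℝ :=
  s ^ (1 - a) / (2 * (1 - a)) - c / (2 * (1 + a)) * s ^ (-(1 + a))

theorem sahara_eq_saharaProfile {a b : ℝ} (ha : a ≠ 1) (ha' : a ≠ -1) (hb : b ≠ 0) (δ w : ℝ) :
    sahara a b δ w = saharaProfile a (b ^ 2) ((w - δ) + √(b ^ 2 + (w - δ) ^ 2)) := by
  unfold sahara saharaProfile
  set x := w - δ
  set r := √(b ^ 2 + x ^ 2)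
  have hs : 0 < x + r := add_sqrt_add_sq_pos (by positivity) x
  have hb2 : b ^ 2 = (x + r) * (r - x) := (add_sqrt_add_sq_mul_sqrt_sub (by positivity) x).symm
  have h1 : 1 - a ≠ 0 := sub_ne_zero.mpr (Ne.symm ha)
  have h2 : 1 + a ≠ 0 := fun h => ha' (by linarith)
  have h3 : a ^ 2 - 1 ≠ 0 := by
    rw [show a ^ 2 - 1 = -((1 - a) * (1 + a)) by ring]
    exact neg_ne_zero.mpr (mul_ne_zero h1 h2)
  rw [rpow_sub hs, rpow_neg hs.le, rpow_add hs, rpow_one, hb2]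
  have hsa : (x + r) ^ a ≠ 0 := (rpow_pos_of_pos hs a).ne'
  field_simp
  ring

theorem tendsto_saharaProfile_atTop_of_one_lt {a : ℝ} (c : ℝ) (ha : 1 < a) :
    Tendsto (saharaProfile a c) atTop (𝓝 0) := by
  have hfirst : Tendsto (fun s : ℝ => s ^ (1 - a)) atTop (𝓝 0) := by
    simpa only [neg_sub] using tendsto_rpow_neg_atTop (sub_pos.mpr ha)
  have hsecond : Tendsto (fun s : ℝ => s ^ (-(1 + a))) atTop (𝓝 0) :=
    tendsto_rpow_neg_atTop (by linarith)
  unfold saharaProfile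
  simpa using (hfirst.div_const (2 * (1 - a))).sub (hsecond.const_mul (c / (2 * (1 + a))))

theorem tendsto_saharaProfile_atTop_of_lt_one {a : ℝ} (c : ℝ) (ha : -1 < a) (ha1 : a < 1) :
    Tendsto (saharaProfile a c) atTop atTop := by
  have hfirst : Tendsto (fun s : ℝ => s ^ (1 - a) / (2 * (1 - a))) atTop atTop :=
    (tendsto_rpow_atTop (sub_pos.mpr ha1)).atTop_div_const (r := 2 * (1 - a)) (by linarith)
  have hsecond : Tendsto (fun s : ℝ => c / (2 * (1 + a)) * s ^ (-(1 + a))) atTop (𝓝 0) := by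
    simpa only [mul_zero] using
      (tendsto_rpow_neg_atTop (y := 1 + a) (by linarith)).const_mul (c / (2 * (1 + a)))
  unfold saharaProfile
  simpa only [sub_eq_add_neg] using hfirst.atTop_add hsecond.neg

theorem tendsto_saharaProfile_nhdsGT_zero {a c : ℝ} (ha : -1 < a) (hc : 0 < c) :
    Tendsto (saharaProfile a c) (𝓝[>] 0) atBot := by
  have hfactor : ∀ s > (0 : ℝ), saharaProfile a c s =
      s ^ (-(1 + a)) * (s ^ 2 / (2 * (1 - a)) - c / (2 * (1 + a))) := by
    intro s hs
    have hpow : s ^ (1 - a) = s ^ (-(1 + a)) * s ^ 2 := by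
      rw [← rpow_two, ← rpow_add hs]; ring_nf
    rw [saharaProfile, hpow]; ring
  have hcoeff : Tendsto (fun s : ℝ => s ^ 2 / (2 * (1 - a)) - c / (2 * (1 + a))) (𝓝[>] 0)
      (𝓝 (-(c / (2 * (1 + a))))) := by
    have : Continuous (fun s : ℝ => s ^ 2 / (2 * (1 - a)) - c / (2 * (1 + a))) := by fun_prop
    simpa using (this.tendsto 0).mono_left nhdsWithin_le_nhds
  have hc' : 0 < c / (2 * (1 + a)) := div_pos hc (by linarith)
  refine ((tendsto_rpow_neg_nhdsGT_zero (by linarith : -(1 + a) < 0)).atTop_mul_neg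
    (neg_lt_zero.mpr hc') hcoeff).congr' ?_
  filter_upwards [self_mem_nhdsWithin] with s hs using (hfactor s hs).symm

/-- for the SAHARA utility, `lim_{w→+∞} U(w) = 0` when `a > 1`,
`lim_{w→+∞} U(w) = +∞` when `a ∈ (0,1)`, and `lim_{w→−∞} U(w) = −∞` for all `a > 0`,
`a ≠ 1`. -/
theorem stmt6 (a b δ : ℝ) (ha : 0 < a) (ha1 : a ≠ 1) (hb : 0 < b) :
    (1 < a → Tendsto (sahara a b δ) atTop (𝓝 0)) ∧
    (a < 1 → Tendsto (sahara a b δ) atTop atTop) ∧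
    Tendsto (sahara a b δ) atBot atBot := by
  have hU : sahara a b δ =
      saharaProfile a (b ^ 2) ∘ (fun x => x + √(b ^ 2 + x ^ 2)) ∘ (fun w => w - δ) :=
    funext (sahara_eq_saharaProfile ha1 (by linarith) hb.ne' δ)
  have hs_atTop : Tendsto ((fun x => x + √(b ^ 2 + x ^ 2)) ∘ (fun w => w - δ)) atTop atTop :=
    (tendsto_add_sqrt_add_sq_atTop _).comp (tendsto_atTop_add_const_right _ _ tendsto_id)
  have hs_atBot : Tendsto ((fun x => x + √(b ^ 2 + x ^ 2)) ∘ (fun w => w - δ)) atBot (𝓝[>] 0) :=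
    (tendsto_add_sqrt_add_sq_atBot (by positivity)).comp
      (tendsto_atBot_add_const_right _ _ tendsto_id)
  rw [hU]
  refine ⟨fun h => ?_, fun h => ?_, ?_⟩
  · exact (tendsto_saharaProfile_atTop_of_one_lt _ h).comp hs_atTop
  · exact (tendsto_saharaProfile_atTop_of_lt_one _ (by linarith) h).comp hs_atTop
  · exact (tendsto_saharaProfile_nhdsGT_zero (by linarith) (by positivity)).comp hs_atBot

end
end

section
/- Assume U satisfies Assumption 1 and is concave, and X satisfies Assumption 2. Let ĉ ∈ [0,+∞) be any number with Γ(ĉ) > −∞. Then Γ(c) > −∞ for all c ∈ [0, ĉ] and Γ is concave on [0, ĉ]; if in addition U is strictly concave, then Γ is strictly concave on [0, ĉ]. -/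
open MeasureTheory ProbabilityTheory Filter Matrix
open scoped ENNReal NNReal Topology

noncomputable section

/-- The vector `v = μ − 𝟏 r_f + γ E[Z]`. -/
def vVec {Ω : Type*} [MeasurableSpace Ω] (P : Measure Ω) {d : ℕ}
    (μ γ : Fin d → ℝ) (rf : ℝ) (Z : Ω → ℝ) : Fin d → ℝ :=
  fun i => μ i - rf + γ i * ∫ ω, Z ω ∂P

/-- The quadratic form `vᵀ Σ⁻¹ v`. -/
def vSv {Ω : Type*} [MeasurableSpace Ω] (P : Measure Ω) {d : ℕ}
    (μ γ : Fin d → ℝ) (rf : ℝ) (A : Matrix (Fin d) (Fin d) ℝ) (Z : Ω → ℝ) : ℝ :=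
  vVec P μ γ rf Z ⬝ᵥ ((A * Aᵀ)⁻¹ *ᵥ vVec P μ γ rf Z)

/-- `α = vᵀΣ⁻¹(μ − 𝟏 r_f)/(vᵀΣ⁻¹v)`. -/
def alphaC {Ω : Type*} [MeasurableSpace Ω] (P : Measure Ω) {d : ℕ}
    (μ γ : Fin d → ℝ) (rf : ℝ) (A : Matrix (Fin d) (Fin d) ℝ) (Z : Ω → ℝ) : ℝ :=
  (vVec P μ γ rf Z ⬝ᵥ ((A * Aᵀ)⁻¹ *ᵥ fun i => μ i - rf)) / vSv P μ γ rf A Z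

/-- `β = vᵀΣ⁻¹γ/(vᵀΣ⁻¹v)`. -/
def betaC {Ω : Type*} [MeasurableSpace Ω] (P : Measure Ω) {d : ℕ}
    (μ γ : Fin d → ℝ) (rf : ℝ) (A : Matrix (Fin d) (Fin d) ℝ) (Z : Ω → ℝ) : ℝ :=
  (vVec P μ γ rf Z ⬝ᵥ ((A * Aᵀ)⁻¹ *ᵥ γ)) / vSv P μ γ rf A Z

/-- `σ = 1/√(vᵀΣ⁻¹v)`. -/
def sigmaC {Ω : Type*} [MeasurableSpace Ω] (P : Measure Ω) {d : ℕ}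
    (μ γ : Fin d → ℝ) (rf : ℝ) (A : Matrix (Fin d) (Fin d) ℝ) (Z : Ω → ℝ) : ℝ :=
  1 / Real.sqrt (vSv P μ γ rf A Z)

/-- `Γ(c) = E[U(W₀(1+r_f) + W₀ c (α + β Z + σ √Z N₁))]`, valued in `EReal`. -/
def GammaFun {Ω : Type*} [MeasurableSpace Ω] (P : Measure Ω) {d : ℕ}
    (μ γ : Fin d → ℝ) (rf : ℝ) (A : Matrix (Fin d) (Fin d) ℝ) (Z : Ω → ℝ)
    (N1 : Ω → ℝ) (W0 : ℝ) (U : ℝ → ℝ) (c : ℝ) : EReal :=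
  eexp P fun ω => U (W0 * (1 + rf) + W0 * c *
    (alphaC P μ γ rf A Z + betaC P μ γ rf A Z * Z ω +
      sigmaC P μ γ rf A Z * Real.sqrt (Z ω) * N1 ω))

/-!
For every outcome `ω`, the map `c ↦ U (W₀ (1 + r_f) + c W₀ η(ω))` is concave, so `Γ` is
concave wherever the expectations are finite. Finiteness on `[0, ĉ]` holds because `U` is
bounded above and a concave function on a segment is bounded below by the smaller of its endpoint
values, `Γ(0)` being a constant. For strict concavity, `η ≠ 0` almost surely: `σ > 0` since
`Σ⁻¹` is positive definite and `v ≠ 0`, and, `Z` being positive, `η = 0` forces the atomless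
Gaussian `N₁` to equal a function of the independent variable `Z`.
-/

open Set

section eexp

variable {Ω : Type*} [MeasurableSpace Ω] {P : Measure Ω} {f : Ω → ℝ}

lemma eexp_eq_integral (hf : Integrable f P) : eexp P f = ((∫ ω, f ω ∂P : ℝ) : EReal) := by
  have hneg : ∫⁻ ω, ENNReal.ofReal (-f ω) ∂P < ⊤ := hf.neg.lintegral_lt_top
  rw [eexp, integral_eq_lintegral_pos_part_sub_lintegral_neg_part hf, EReal.coe_sub,
    EReal.coe_ennreal_toReal hf.lintegral_lt_top.ne, EReal.coe_ennreal_toReal hneg.ne]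

lemma integrable_of_bot_lt_eexp [IsFiniteMeasure P] (hf : AEStronglyMeasurable f P) {M : ℝ}
    (hM : ∀ ω, f ω ≤ M) (h : ⊥ < eexp P f) : Integrable f P := by
  have hneg : ∫⁻ ω, ENNReal.ofReal (max (-f ω) 0) ∂P ≠ ⊤ := by
    simp only [ENNReal.ofReal_max, ENNReal.ofReal_zero, max_zero]
    intro htop
    rw [eexp, htop, EReal.coe_ennreal_top, EReal.sub_top] at h
    exact lt_irrefl _ h
  have hneg_int : Integrable (fun ω => max (-f ω) 0) P :=
    (lintegral_ofReal_ne_top_iff_integrable (by fun_prop)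
      (ae_of_all _ fun ω => le_max_right _ _)).1 hneg
  refine integrable_of_le_of_le hf (ae_of_all _ fun ω => ?_) (ae_of_all _ hM) hneg_int.neg
    (integrable_const M)
  simp only [Pi.neg_apply, neg_le]
  exact le_max_left _ _

end eexp

section ConcaveIntegral

variable {Ω E : Type*} [MeasurableSpace Ω] {P : Measure Ω} [AddCommGroup E] [Module ℝ E]
  {s : Set E} {g : E → Ω → ℝ}

lemma concaveOn_integral (hs : Convex ℝ s) (hg : ∀ ω, ConcaveOn ℝ s (g · ω))
    (hint : ∀ x ∈ s, Integrable (g x) P) : ConcaveOn ℝ s fun x => ∫ ω, g x ω ∂P := by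
  refine ⟨hs, fun x hx y hy a b ha hb hab => ?_⟩
  rw [smul_eq_mul, smul_eq_mul, ← integral_const_mul, ← integral_const_mul,
    ← integral_add ((hint x hx).const_mul a) ((hint y hy).const_mul b)]
  exact integral_mono (((hint x hx).const_mul a).add ((hint y hy).const_mul b))
    (hint _ (hs hx hy ha hb hab)) fun ω => (hg ω).2 hx hy ha hb hab

lemma strictConcaveOn_integral (hg : ∀ ω, ConcaveOn ℝ s (g · ω))
    (hint : ∀ x ∈ s, Integrable (g x) P) (hstrict : ∃ᵐ ω ∂P, StrictConcaveOn ℝ s (g · ω)) :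
    StrictConcaveOn ℝ s fun x => ∫ ω, g x ω ∂P := by
  obtain ⟨ω₀, hω₀⟩ := hstrict.exists
  refine ⟨hω₀.1, fun x hx y hy hxy a b ha hb hab => ?_⟩
  have hxy_mem : a • x + b • y ∈ s := hω₀.1 hx hy ha.le hb.le hab
  have hcomb : Integrable (fun ω => a * g x ω + b * g y ω) P :=
    ((hint x hx).const_mul a).add ((hint y hy).const_mul b)
  set gap : Ω → ℝ := fun ω => g (a • x + b • y) ω - (a * g x ω + b * g y ω)
  have hgap_nonneg : 0 ≤ gap := fun ω =>
    sub_nonneg.2 ((hg ω).2 hx hy ha.le hb.le hab)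
  have hgap_pos : 0 < ∫ ω, gap ω ∂P := by
    rw [integral_pos_iff_support_of_nonneg hgap_nonneg ((hint _ hxy_mem).sub hcomb)]
    refine (pos_iff_ne_zero.2 (frequently_ae_iff.1 hstrict)).trans_le (measure_mono ?_)
    intro ω hω
    exact (sub_pos.2 (hω.2 hx hy hxy ha hb hab)).ne'
  rw [integral_sub (hint _ hxy_mem) hcomb,
    integral_add ((hint x hx).const_mul a) ((hint y hy).const_mul b),
    integral_const_mul, integral_const_mul] at hgap_pos
  simpa only [smul_eq_mul, sub_pos] using hgap_pos

end ConcaveIntegral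

lemma integrable_of_concaveOn_of_mem_Icc {Ω : Type*} [MeasurableSpace Ω] {P : Measure Ω}
    [IsFiniteMeasure P] {s : Set ℝ} {g : ℝ → Ω → ℝ} (hg : ∀ ω, ConcaveOn ℝ s (g · ω))
    {a b c : ℝ} (ha : a ∈ s) (hb : b ∈ s) (hc : c ∈ Icc a b)
    (hmeas : AEStronglyMeasurable (g c) P) {M : ℝ} (hM : ∀ ω, g c ω ≤ M)
    (ha_int : Integrable (g a) P) (hb_int : Integrable (g b) P) : Integrable (g c) P :=
  integrable_of_le_of_le hmeas (ae_of_all _ fun ω => (hg ω).min_le_of_mem_Icc ha hb hc)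
    (ae_of_all _ hM) (ha_int.inf hb_int) (integrable_const M)

lemma ConcaveOn.comp_add_mul {U : ℝ → ℝ} (hU : ConcaveOn ℝ univ U) (w y : ℝ) :
    ConcaveOn ℝ univ fun c => U (w + c * y) := by
  refine ⟨convex_univ, fun c _ c' _ a b ha hb hab => ?_⟩
  have h := hU.2 (mem_univ (w + c * y)) (mem_univ (w + c' * y)) ha hb hab
  simp only [smul_eq_mul] at h ⊢
  convert h using 2
  linear_combination -w * hab

lemma StrictConcaveOn.comp_add_mul {U : ℝ → ℝ} (hU : StrictConcaveOn ℝ univ U) (w : ℝ)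
    {y : ℝ} (hy : y ≠ 0) : StrictConcaveOn ℝ univ fun c => U (w + c * y) := by
  refine ⟨convex_univ, fun c _ c' _ hcc' a b ha hb hab => ?_⟩
  have hne : w + c * y ≠ w + c' * y := fun h => hcc' (mul_right_cancel₀ hy (add_left_cancel h))
  have h := hU.2 (mem_univ _) (mem_univ _) hne ha hb hab
  simp only [smul_eq_mul] at h ⊢
  convert h using 2
  linear_combination -w * hab

lemma ProbabilityTheory.IndepFun.measure_eq_comp_eq_zero {Ω α : Type*} [MeasurableSpace Ω]
    [MeasurableSpace α] {P : Measure Ω} [IsFiniteMeasure P] {X : Ω → α} {Y : Ω → ℝ}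
    (hX : Measurable X) (hY : Measurable Y) (hXY : IndepFun X Y P) [NullSingletonClass (P.map Y)]
    {φ : α → ℝ} (hφ : Measurable φ) : P {ω | Y ω = φ (X ω)} = 0 := by
  have hS : MeasurableSet {p : α × ℝ | p.2 = φ p.1} :=
    measurableSet_eq_fun measurable_snd (hφ.comp measurable_fst)
  change P ((fun ω => (X ω, Y ω)) ⁻¹' {p : α × ℝ | p.2 = φ p.1}) = 0
  rw [← Measure.map_apply (hX.prodMk hY) hS,
    (indepFun_iff_map_prod_eq_prod_map_map hX.aemeasurable hY.aemeasurable).1 hXY,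
    Measure.prod_apply hS]
  simp [Set.preimage, measure_singleton]

lemma ae_add_mul_sqrt_mul_ne_zero {Ω : Type*} [MeasurableSpace Ω] {P : Measure Ω}
    [IsFiniteMeasure P] {Z N1 : Ω → ℝ} (hZmeas : Measurable Z) (hN1meas : Measurable N1)
    (hN1law : P.map N1 = gaussianReal 0 1) (hindep : IndepFun Z N1 P) (hZpos : ∀ ω, 0 < Z ω)
    (a b : ℝ) {s : ℝ} (hs : 0 < s) :
    ∀ᵐ ω ∂P, a + b * Z ω + s * Real.sqrt (Z ω) * N1 ω ≠ 0 := by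
  have : NullSingletonClass (P.map N1) := hN1law ▸ nullSingletonClass_gaussianReal one_ne_zero
  rw [ae_iff]
  refine measure_mono_null (fun ω hω => ?_) (hindep.measure_eq_comp_eq_zero hZmeas hN1meas
    (φ := fun z => -(a + b * z) / (s * Real.sqrt z)) (by fun_prop))
  have hsZ : s * Real.sqrt (Z ω) ≠ 0 := (mul_pos hs (Real.sqrt_pos.2 (hZpos ω))).ne'
  simp only [Set.mem_ofPred_eq, not_not] at hω ⊢
  rw [eq_div_iff hsZ]
  linarith

lemma sigmaC_pos {Ω : Type*} [MeasurableSpace Ω] {P : Measure Ω} {d : ℕ} {μ γ : Fin d → ℝ}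
    {rf : ℝ} {A : Matrix (Fin d) (Fin d) ℝ} {Z : Ω → ℝ} (hPD : (A * Aᵀ).PosDef)
    (hv : vVec P μ γ rf Z ≠ 0) : 0 < sigmaC P μ γ rf A Z :=
  one_div_pos.2 (Real.sqrt_pos.2 (hPD.inv.dotProduct_mulVec_pos hv))

theorem stmt9_general {Ω : Type*} [MeasurableSpace Ω] (P : Measure Ω) [IsProbabilityMeasure P]
    {d : ℕ} (μ γ : Fin d → ℝ) (A : Matrix (Fin d) (Fin d) ℝ)
    (Z : Ω → ℝ) (N1 : Ω → ℝ)
    (hZmeas : Measurable Z) (hN1meas : Measurable N1)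
    (hN1law : Measure.map N1 P = gaussianReal 0 1)
    (hindep1 : IndepFun Z N1 P)
    (hPD : (A * Aᵀ).PosDef)
    (rf W0 : ℝ) (hW0 : 0 < W0)
    -- Assumption 1
    (U : ℝ → ℝ) (hUcont : Continuous U) (hUbdd : BddAbove (Set.range U))
    -- concavity
    (hUconc : ConcaveOn ℝ Set.univ U)
    -- Assumption 2
    (hZpos : ∀ ω, 0 < Z ω)
    (hv : vVec P μ γ rf Z ≠ 0)
    (chat : ℝ)
    (hΓchat : ⊥ < GammaFun P μ γ rf A Z N1 W0 U chat) :
    (∀ c ∈ Set.Icc (0 : ℝ) chat, ⊥ < GammaFun P μ γ rf A Z N1 W0 U c) ∧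
    ConcaveOn ℝ (Set.Icc (0 : ℝ) chat)
      (fun c => (GammaFun P μ γ rf A Z N1 W0 U c).toReal) ∧
    (StrictConcaveOn ℝ Set.univ U →
      StrictConcaveOn ℝ (Set.Icc (0 : ℝ) chat)
        (fun c => (GammaFun P μ γ rf A Z N1 W0 U c).toReal)) := by
  set η : Ω → ℝ := fun ω => alphaC P μ γ rf A Z + betaC P μ γ rf A Z * Z ω +
    sigmaC P μ γ rf A Z * Real.sqrt (Z ω) * N1 ω
  set g : ℝ → Ω → ℝ := fun c ω => U (W0 * (1 + rf) + c * (W0 * η ω))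
  have hΓ : ∀ c, GammaFun P μ γ rf A Z N1 W0 U c = eexp P (g c) := fun c => by
    simp only [GammaFun, g, η, mul_left_comm c W0, mul_assoc W0 c]
  obtain ⟨M, hM⟩ := hUbdd
  have hg_le : ∀ c ω, g c ω ≤ M := fun c ω => hM ⟨_, rfl⟩
  have hg_meas : ∀ c, AEStronglyMeasurable (g c) P := fun c => by
    simp only [g, η]; fun_prop
  have hg_conc : ∀ ω, ConcaveOn ℝ univ (g · ω) := fun ω => hUconc.comp_add_mul _ _
  have hg_zero : Integrable (g 0) P := by
    simp only [g, zero_mul, add_zero]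
    exact integrable_const _
  have hg_chat : Integrable (g chat) P :=
    integrable_of_bot_lt_eexp (hg_meas chat) (hg_le chat) (hΓ chat ▸ hΓchat)
  have hint : ∀ c ∈ Icc 0 chat, Integrable (g c) P := fun c hc =>
    integrable_of_concaveOn_of_mem_Icc hg_conc (mem_univ 0) (mem_univ chat) hc (hg_meas c)
      (hg_le c) hg_zero hg_chat
  have hΓ_eq : EqOn (fun c => ∫ ω, g c ω ∂P) (fun c => (GammaFun P μ γ rf A Z N1 W0 U c).toReal)
      (Icc 0 chat) := fun c hc => by
    simp only [hΓ, eexp_eq_integral (hint c hc), EReal.toReal_coe]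
  have hg_conc_Icc : ∀ ω, ConcaveOn ℝ (Icc 0 chat) (g · ω) := fun ω =>
    (hg_conc ω).subset (subset_univ _) (convex_Icc 0 chat)
  refine ⟨fun c hc => ?_, (concaveOn_integral (convex_Icc 0 chat) hg_conc_Icc hint).congr hΓ_eq,
    fun hU => (strictConcaveOn_integral hg_conc_Icc hint ?_).congr hΓ_eq⟩
  · rw [hΓ, eexp_eq_integral (hint c hc)]
    exact EReal.bot_lt_coe _
  · have hη := ae_add_mul_sqrt_mul_ne_zero hZmeas hN1meas hN1law hindep1 hZpos
      (alphaC P μ γ rf A Z) (betaC P μ γ rf A Z) (sigmaC_pos hPD hv)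
    exact (hη.mono fun ω hω => (hU.comp_add_mul _ (mul_ne_zero hW0.ne' hω)).subset
      (subset_univ _) (convex_Icc 0 chat)).frequently

/-- under Assumptions 1, 2 and concavity of `U`, if `Γ(chat) > −∞` for some
`chat ≥ 0`, then `Γ(c) > −∞` for all `c ∈ [0, chat]` and `Γ` is concave on `[0, chat]`;
if moreover `U` is strictly concave, `Γ` is strictly concave on `[0, chat]`. -/
theorem stmt9 {Ω : Type*} [MeasurableSpace Ω] (P : Measure Ω) [IsProbabilityMeasure P]
    {d : ℕ} (μ γ : Fin d → ℝ) (A : Matrix (Fin d) (Fin d) ℝ)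
    (Z : Ω → ℝ) (N : Ω → Fin d → ℝ) (N1 : Ω → ℝ)
    (hZmeas : Measurable Z) (hNmeas : Measurable N) (hN1meas : Measurable N1)
    (hNlaw : Measure.map N P = Measure.pi fun _ : Fin d => gaussianReal 0 1)
    (hindep : IndepFun Z N P)
    (hN1law : Measure.map N1 P = gaussianReal 0 1)
    (hindep1 : IndepFun Z N1 P)
    (hPD : (A * Aᵀ).PosDef)
    (rf W0 : ℝ) (hW0 : 0 < W0)
    -- Assumption 1
    (U : ℝ → ℝ) (hUcont : Continuous U) (hUmono : Monotone U)
    (hUnonconst : ∃ w w' : ℝ, U w ≠ U w') (hUbdd : BddAbove (Set.range U))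
    (hUbot : Tendsto U atBot atBot)
    -- concavity
    (hUconc : ConcaveOn ℝ Set.univ U)
    -- Assumption 2
    (hZpos : ∀ ω, 0 < Z ω)
    (hZk : ∃ k : ℕ, 1 ≤ k ∧ (∫⁻ ω, ENNReal.ofReal (Z ω ^ k) ∂P) < ⊤)
    (hv : vVec P μ γ rf Z ≠ 0)
    (chat : ℝ) (hchat : 0 ≤ chat)
    (hΓchat : ⊥ < GammaFun P μ γ rf A Z N1 W0 U chat) :
    (∀ c ∈ Set.Icc (0 : ℝ) chat, ⊥ < GammaFun P μ γ rf A Z N1 W0 U c) ∧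
    ConcaveOn ℝ (Set.Icc (0 : ℝ) chat)
      (fun c => (GammaFun P μ γ rf A Z N1 W0 U c).toReal) ∧
    (StrictConcaveOn ℝ Set.univ U →
      StrictConcaveOn ℝ (Set.Icc (0 : ℝ) chat)
        (fun c => (GammaFun P μ γ rf A Z N1 W0 U c).toReal)) :=
  stmt9_general P μ γ A Z N1 hZmeas hN1meas hN1law hindep1 hPD rf W0 hW0 U hUcont hUbdd hUconc hZpos
    hv chat hΓchat

end
end

section
/- Assume U satisfies Assumption 1 and X satisfies Assumption 2, and let ĉ ∈ [0,+∞) be any number with Γ(ĉ) > −∞. Then Γ is upper semi-continuous on [0, ĉ]. -/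
open MeasureTheory ProbabilityTheory Filter Matrix
open scoped ENNReal NNReal Topology

noncomputable section

private lemma eaux' (p : ℝ≥0∞) (hp : p ≠ ⊤) : (p : EReal) = ((p.toReal : ℝ) : EReal) := by
  conv_lhs => rw [← ENNReal.ofReal_toReal hp]
  rw [EReal.coe_ennreal_ofReal, max_eq_left ENNReal.toReal_nonneg]

private lemma eaux2' (p q : ℝ≥0∞) (hp : p ≠ ⊤) (hq : q ≠ ⊤) :
    (p : EReal) - (q : EReal) = ((p.toReal - q.toReal : ℝ) : EReal) := by
  rw [eaux' p hp, eaux' q hq, ← EReal.coe_sub]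

/-- under Assumptions 1 and 2, if `Γ(ĉ) > −∞` for some `ĉ ≥ 0`, then
`Γ` is upper semi-continuous on `[0, ĉ]`. -/
theorem stmt11 {Ω : Type*} [MeasurableSpace Ω] (P : Measure Ω) [IsProbabilityMeasure P]
    {d : ℕ} (μ γ : Fin d → ℝ) (A : Matrix (Fin d) (Fin d) ℝ)
    (Z : Ω → ℝ) (N : Ω → Fin d → ℝ) (N1 : Ω → ℝ)
    (hZmeas : Measurable Z) (hNmeas : Measurable N) (hN1meas : Measurable N1)
    (hNlaw : Measure.map N P = Measure.pi fun _ : Fin d => gaussianReal 0 1)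
    (hindep : IndepFun Z N P)
    (hN1law : Measure.map N1 P = gaussianReal 0 1)
    (hindep1 : IndepFun Z N1 P)
    (hPD : (A * Aᵀ).PosDef)
    (rf W0 : ℝ) (hW0 : 0 < W0)
    -- Assumption 1
    (U : ℝ → ℝ) (hUcont : Continuous U) (hUmono : Monotone U)
    (hUnonconst : ∃ w w' : ℝ, U w ≠ U w') (hUbdd : BddAbove (Set.range U))
    (hUbot : Tendsto U atBot atBot)
    -- Assumption 2
    (hZpos : ∀ ω, 0 < Z ω)
    (hZk : ∃ k : ℕ, 1 ≤ k ∧ (∫⁻ ω, ENNReal.ofReal (Z ω ^ k) ∂P) < ⊤)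
    (hv : vVec P μ γ rf Z ≠ 0)
    (chat : ℝ) (hchat : 0 ≤ chat)
    (hΓchat : ⊥ < GammaFun P μ γ rf A Z N1 W0 U chat) :
    UpperSemicontinuousOn (fun c => GammaFun P μ γ rf A Z N1 W0 U c)
      (Set.Icc (0 : ℝ) chat) := by
  obtain ⟨M, hM⟩ := hUbdd
  have hMb : ∀ w, U w ≤ M := fun w => hM ⟨w, rfl⟩
  set al := alphaC P μ γ rf A Z with hal
  set be := betaC P μ γ rf A Z with hbe
  set si := sigmaC P μ γ rf A Z with hsi
  set g : ℝ → Ω → ℝ := fun c ω => U (W0 * (1 + rf) + W0 * c *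
    (al + be * Z ω + si * Real.sqrt (Z ω) * N1 ω)) with hgdef
  have hgmeas : ∀ c : ℝ, Measurable (g c) := by
    intro c
    apply hUcont.measurable.comp
    apply Measurable.add measurable_const
    apply Measurable.const_mul
    exact ((measurable_const.add (hZmeas.const_mul be)).add
      (((hZmeas.sqrt).const_mul si).mul hN1meas))
  have hgcont : ∀ ω : Ω, Continuous fun c : ℝ => g c ω := by
    intro ω
    exact hUcont.comp (by fun_prop)
  set pos : ℝ → ℝ≥0∞ := fun c => ∫⁻ ω, ENNReal.ofReal (g c ω) ∂P with hposdef
  set neg : ℝ → ℝ≥0∞ := fun c => ∫⁻ ω, ENNReal.ofReal (-(g c ω)) ∂P with hnegdef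
  have hΓ : ∀ c : ℝ, GammaFun P μ γ rf A Z N1 W0 U c = (pos c : EReal) - (neg c : EReal) :=
    fun c => rfl
  set B : ℝ≥0∞ := ENNReal.ofReal M with hBdef
  have hBne : B ≠ ⊤ := ENNReal.ofReal_ne_top
  have hposle : ∀ c : ℝ, pos c ≤ B := by
    intro c
    calc pos c ≤ ∫⁻ _, B ∂P := lintegral_mono fun ω => ENNReal.ofReal_le_ofReal (hMb _)
    _ = B := by simp
  have hposne : ∀ c : ℝ, pos c ≠ ⊤ := fun c => ((hposle c).trans_lt hBne.lt_top).ne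
  intro c hc y hy
  by_contra hcon
  rw [Filter.not_eventually] at hcon
  obtain ⟨u, hu, hyu⟩ := Filter.exists_seq_forall_of_frequently hcon
  have hyu' : ∀ n, y ≤ GammaFun P μ γ rf A Z N1 W0 U (u n) := fun n => not_lt.1 (hyu n)
  have huc : Tendsto u atTop (𝓝 c) := hu.mono_right nhdsWithin_le_nhds
  have hgn : ∀ ω, Tendsto (fun n => g (u n) ω) atTop (𝓝 (g c ω)) :=
    fun ω => ((hgcont ω).tendsto c).comp huc
  -- dominated convergence for the positive part
  have hpos : Tendsto (fun n => pos (u n)) atTop (𝓝 (pos c)) := by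
    apply tendsto_lintegral_of_dominated_convergence (fun _ => B)
      (fun n => ENNReal.measurable_ofReal.comp (hgmeas (u n)))
    · intro n
      filter_upwards with ω
      exact ENNReal.ofReal_le_ofReal (hMb _)
    · simp [hBne]
    · filter_upwards with ω
      exact (ENNReal.continuous_ofReal.tendsto _).comp (hgn ω)
  -- Fatou for the negative part
  have hneg : neg c ≤ Filter.liminf (fun n => neg (u n)) atTop := by
    have hmeas : ∀ n, Measurable fun ω => ENNReal.ofReal (-(g (u n) ω)) :=
      fun n => ENNReal.measurable_ofReal.comp (hgmeas (u n)).neg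
    have h1 : neg c = ∫⁻ ω, Filter.liminf (fun n => ENNReal.ofReal (-(g (u n) ω))) atTop ∂P := by
      apply lintegral_congr
      intro ω
      exact (((ENNReal.continuous_ofReal.tendsto _).comp ((hgn ω).neg)).liminf_eq).symm
    rw [h1]
    exact lintegral_liminf_le hmeas
  -- pick a real number t strictly between Γ(c) and y
  obtain ⟨t, ht1, ht2⟩ := EReal.exists_between_coe_real hy
  -- choose truncation level K
  set K : ℝ≥0∞ := if neg c < ⊤ then neg c else B + ENNReal.ofReal (|t| + 1) with hKdef
  have hKne : K ≠ ⊤ := by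
    rw [hKdef]
    split_ifs with h
    · exact h.ne
    · exact ENNReal.add_ne_top.2 ⟨hBne, ENNReal.ofReal_ne_top⟩
  set q : ℝ≥0∞ := min (neg c) K with hqdef
  have hqne : q ≠ ⊤ := ((min_le_right _ _).trans_lt hKne.lt_top).ne
  set a : ℝ := (pos c).toReal with hadef
  set b : ℝ := q.toReal with hbdef
  -- key inequality : a - b < t
  have hkey : a - b < t := by
    by_cases h : neg c < ⊤
    · have hq : q = neg c := by
        rw [hqdef, hKdef, if_pos h]
        exact min_self _
      have : GammaFun P μ γ rf A Z N1 W0 U c = ((a - b : ℝ) : EReal) := by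
        rw [hΓ c, eaux2' _ _ (hposne c) h.ne, hadef, hbdef, hq]
      have ht1x : GammaFun P μ γ rf A Z N1 W0 U c < (t : EReal) := ht1
      rw [this] at ht1x
      exact_mod_cast ht1x
    · have hq : q = K := min_eq_right (le_trans le_top (not_lt.1 h))
      have hb : b = B.toReal + (|t| + 1) := by
        rw [hbdef, hq, hKdef, if_neg h, ENNReal.toReal_add hBne ENNReal.ofReal_ne_top]
        congr 1
        exact ENNReal.toReal_ofReal (by positivity)
      have ha : a ≤ B.toReal := ENNReal.toReal_mono hBne (hposle c)
      have := neg_abs_le t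
      rw [hb]
      linarith
  set ε : ℝ := (t - (a - b)) / 2 with hεdef
  have hε : 0 < ε := by rw [hεdef]; linarith
  -- eventual bounds
  have ev1 : ∀ᶠ n in atTop, (pos (u n)).toReal < a + ε := by
    have : Tendsto (fun n => (pos (u n)).toReal) atTop (𝓝 a) :=
      (ENNReal.tendsto_toReal (hposne c)).comp hpos
    exact this.eventually (gt_mem_nhds (by linarith))
  have ev2 : ∀ᶠ n in atTop, b - ε < (min (neg (u n)) K).toReal := by
    by_cases hbe' : 0 ≤ b - ε
    · have hq0 : ENNReal.ofReal (b - ε) < q := by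
        rw [ENNReal.ofReal_lt_iff_lt_toReal hbe' hqne]
        rw [← hbdef]; linarith
      have hlt : ENNReal.ofReal (b - ε) < Filter.liminf (fun n => neg (u n)) atTop :=
        lt_of_lt_of_le (hq0.trans_le (min_le_left _ _)) hneg
      have hev : ∀ᶠ n in atTop, ENNReal.ofReal (b - ε) < neg (u n) :=
        Filter.eventually_lt_of_lt_liminf hlt
      filter_upwards [hev] with n hn
      have hmin : ENNReal.ofReal (b - ε) < min (neg (u n)) K :=
        lt_min hn (hq0.trans_le (min_le_right _ _))
      have hne : min (neg (u n)) K ≠ ⊤ := ((min_le_right _ _).trans_lt hKne.lt_top).ne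
      have := (ENNReal.toReal_lt_toReal ENNReal.ofReal_ne_top hne).2 hmin
      rwa [ENNReal.toReal_ofReal hbe'] at this
    · filter_upwards with n
      have := ENNReal.toReal_nonneg (a := min (neg (u n)) K)
      linarith
  obtain ⟨n, hn1, hn2⟩ := (ev1.and ev2).exists
  -- derive the contradiction
  have hfin : GammaFun P μ γ rf A Z N1 W0 U (u n) < y := by
    have hminne : min (neg (u n)) K ≠ ⊤ := ((min_le_right _ _).trans_lt hKne.lt_top).ne
    have step1 : GammaFun P μ γ rf A Z N1 W0 U (u n) ≤
        (pos (u n) : EReal) - (min (neg (u n)) K : ℝ≥0∞) := by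
      rw [hΓ (u n)]
      exact EReal.sub_le_sub le_rfl (EReal.coe_ennreal_le_coe_ennreal_iff.2 (min_le_left _ _))
    have step2 : ((pos (u n) : EReal) - (min (neg (u n)) K : ℝ≥0∞) : EReal) =
        (((pos (u n)).toReal - (min (neg (u n)) K).toReal : ℝ) : EReal) :=
      eaux2' _ _ (hposne (u n)) hminne
    have step3 : (pos (u n)).toReal - (min (neg (u n)) K).toReal < t := by
      have : a + ε - (b - ε) = t := by rw [hεdef]; ring
      linarith
    calc GammaFun P μ γ rf A Z N1 W0 U (u n)
        ≤ (((pos (u n)).toReal - (min (neg (u n)) K).toReal : ℝ) : EReal) :=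
          step2 ▸ step1
      _ < (t : EReal) := by exact_mod_cast step3
      _ < y := ht2
  exact absurd hfin (hyu n)


end
end

section
/- Let U: ℝ → ℝ be finite-valued and non-decreasing. If E[U(X_δ)] < +∞ for every δ = (δ₁,δ₂,δ₃) with δᵢ ≥ 0, then E[U(W(x))] < +∞ for every portfolio x ∈ ℝ^d with finite Euclidean norm. Consequently, if in addition sup_{x∈ℝ^d} E[U(W(x))] = +∞, then the economy (U, X) admits an asymptotically optimal portfolio: there exists a sequence of portfolios xₙ with |xₙ| → +∞ and E[U(W(xₙ))] → +∞, while no portfolio with finite Euclidean norm gives infinite expected utility. -/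
open MeasureTheory ProbabilityTheory Filter Matrix
open scoped ENNReal NNReal Topology

noncomputable section

/-! Since `U` is nondecreasing, it suffices to bound the wealth pathwise by a variable of the form
`X_δ`. If `|xᵢ| ≤ s` for all `i`, then `W(x) ≤ a + b Z + c √Z ‖N‖_∞` with `a, b, c ≥ 0` depending
only on `s`. The sup norm `‖N‖_∞` is either `0` or some `|N_j|`, and each pair `(Z, N_j)` has the
law of `(Z, N(0,1))`, so `E[U(W(x))⁺] ≤ E[U(X_(a,b,0))⁺] + d · E[U(X_(a,b,c))⁺] < ∞`. The bound is
uniform on balls, so a sequence of portfolios along which the expected utility exceeds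
`max(bound on the ball of radius n, n)` must leave every ball. -/

lemma eexp_le_toReal_of_lintegral_le {Ω : Type*} [MeasurableSpace Ω] {P : Measure Ω}
    {f : Ω → ℝ} {K : ℝ≥0∞} (hf : ∫⁻ ω, ENNReal.ofReal (f ω) ∂P ≤ K) (hK : K ≠ ⊤) :
    eexp P f ≤ K.toReal := by
  rw [EReal.coe_ennreal_toReal hK]
  refine EReal.sub_le_of_le_add ((EReal.coe_ennreal_le_coe_ennreal_iff.2 hf).trans ?_)
  exact le_add_of_nonneg_right (EReal.coe_ennreal_nonneg _)

lemma lintegral_ofReal_ne_top_of_eexp_lt_top {Ω : Type*} [MeasurableSpace Ω] {P : Measure Ω}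
    [IsFiniteMeasure P] {f : Ω → ℝ} {m : ℝ} (hm : ∀ ω, m ≤ f ω) (hf : eexp P f < ⊤) :
    ∫⁻ ω, ENNReal.ofReal (f ω) ∂P ≠ ⊤ := by
  have hneg : ∫⁻ ω, ENNReal.ofReal (-f ω) ∂P ≠ ⊤ := by
    refine ne_top_of_le_ne_top ?_
      (lintegral_mono fun ω => ENNReal.ofReal_le_ofReal (neg_le_neg (hm ω)))
    rw [lintegral_const]
    exact ENNReal.mul_ne_top ENNReal.ofReal_ne_top (measure_ne_top P _)
  intro htop
  rw [eexp, htop, EReal.coe_ennreal_top,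
    EReal.top_sub (by rwa [Ne, EReal.coe_ennreal_eq_top_iff])] at hf
  exact lt_irrefl _ hf

lemma exists_seq_tendsto_top_of_iSup_eq_top {α : Type*} {ρ : α → ℝ} {F : α → EReal}
    (hbdd : ∀ n : ℕ, ∃ K : ℝ, ∀ x, ρ x ≤ n → F x ≤ K) (hsup : ⨆ x, F x = ⊤) :
    ∃ xs : ℕ → α, Tendsto (fun n => ρ (xs n)) atTop atTop ∧
      Tendsto (fun n => F (xs n)) atTop (𝓝 ⊤) := by
  choose K hK using hbdd
  have hexists : ∀ n : ℕ, ∃ x, ((max (K n) n : ℝ) : EReal) < F x := fun n =>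
    lt_iSup_iff.mp (hsup ▸ EReal.coe_lt_top _)
  choose xs hxs using hexists
  refine ⟨xs, tendsto_atTop_mono (fun n => ?_) tendsto_natCast_atTop_atTop, ?_⟩
  · by_contra! hn
    exact (hK n (xs n) hn.le).not_gt ((EReal.coe_le_coe_iff.2 (le_max_left _ _)).trans_lt (hxs n))
  · rw [EReal.tendsto_nhds_top_iff_real]
    intro r
    filter_upwards [eventually_gt_atTop ⌈r⌉₊] with n hn
    refine lt_of_le_of_lt (EReal.coe_le_coe_iff.2 ?_) (hxs n)
    exact (Nat.le_ceil r).trans ((Nat.cast_le.2 hn.le).trans (le_max_right _ _))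

lemma identDistrib_prodMk_eval_of_map_eq_pi {Ω : Type*} [MeasurableSpace Ω] {P : Measure Ω}
    [IsFiniteMeasure P] {ι : Type*} [Fintype ι] {ν : Measure ℝ} [IsProbabilityMeasure ν]
    {Z Y : Ω → ℝ} {N : Ω → ι → ℝ} (hZ : Measurable Z) (hN : Measurable N) (hY : Measurable Y)
    (hNlaw : P.map N = Measure.pi fun _ => ν) (hZN : IndepFun Z N P)
    (hYlaw : P.map Y = ν) (hZY : IndepFun Z Y P) (i : ι) :
    IdentDistrib (fun ω => (Z ω, N ω i)) (fun ω => (Z ω, Y ω)) P P := by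
  have hNi : IdentDistrib (fun ω => N ω i) Y P P :=
    { aemeasurable_fst := ((measurable_pi_apply i).comp hN).aemeasurable
      aemeasurable_snd := hY.aemeasurable
      map_eq := hYlaw ▸ ((measurePreserving_eval _ i).comp ⟨hN, hNlaw⟩).map_eq }
  exact (IdentDistrib.refl hZ.aemeasurable).prodMk hNi
    (hZN.comp measurable_id (measurable_pi_apply i)) hZY

lemma apply_norm_le_apply_zero_add_sum {ι : Type*} [Fintype ι] (g : ℝ → ℝ≥0∞)
    (v : ι → ℝ) : g ‖v‖ ≤ g 0 + ∑ i, g |v i| := by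
  rw [Pi.norm_def]
  refine Finset.sup_induction (p := fun t : ℝ≥0 => g t ≤ g 0 + ∑ i, g |v i|) le_self_add
    (fun t₁ h₁ t₂ h₂ => ?_) (fun i _ => le_add_left ?_)
  · rcases le_total t₁ t₂ with h | h
    · rwa [sup_of_le_right h]
    · rwa [sup_of_le_left h]
  · exact Finset.single_le_sum (f := fun i => g |v i|) (fun _ _ => zero_le) (Finset.mem_univ i)

lemma abs_dotProduct_le {ι : Type*} [Fintype ι] {x : ι → ℝ} {s : ℝ} (hx : ∀ i, |x i| ≤ s)
    (y : ι → ℝ) : |x ⬝ᵥ y| ≤ s * ∑ i, |y i| := by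
  rw [Finset.mul_sum]
  refine (Finset.abs_sum_le_sum_abs _ _).trans (Finset.sum_le_sum fun i _ => ?_)
  rw [abs_mul]
  exact mul_le_mul_of_nonneg_right (hx i) (abs_nonneg _)

lemma abs_mulVec_le {ι : Type*} [Fintype ι] (A : Matrix ι ι ℝ) (v : ι → ℝ) (i : ι) :
    |(A *ᵥ v) i| ≤ (∑ j, |A i j|) * ‖v‖ := by
  rw [mulVec, dotProduct_comm, mul_comm]
  exact abs_dotProduct_le (fun j => norm_le_pi_norm v j) _

lemma exists_wealth_le_of_abs_le {Ω : Type*} {d : ℕ} (μ γ : Fin d → ℝ)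
    (A : Matrix (Fin d) (Fin d) ℝ) (Z : Ω → ℝ) (N : Ω → Fin d → ℝ) (rf W0 : ℝ) {s : ℝ}
    (hs : 0 ≤ s) : ∃ a b c : ℝ, 0 ≤ a ∧ 0 ≤ b ∧ 0 ≤ c ∧ ∀ x : Fin d → ℝ, (∀ i, |x i| ≤ s) →
      ∀ ω, 0 ≤ Z ω → wealth μ γ A Z N rf W0 x ω ≤ a + b * Z ω + c * Real.sqrt (Z ω) * ‖N ω‖ := by
  refine ⟨|W0 * (1 + rf)| + |W0| * s * ∑ i, |μ i - rf|, |W0| * s * ∑ i, |γ i|,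
    |W0| * s * ∑ i, ∑ j, |A i j|, by positivity, by positivity, by positivity,
    fun x hx ω hZ => ?_⟩
  have hsplit : ∑ i, x i * (nmvmX μ γ A Z N ω i - rf)
      = x ⬝ᵥ (fun i => μ i - rf) + Z ω * x ⬝ᵥ γ + Real.sqrt (Z ω) * x ⬝ᵥ (A *ᵥ N ω) := by
    simp only [nmvmX, dotProduct, Finset.mul_sum, ← Finset.sum_add_distrib]
    exact Finset.sum_congr rfl fun i _ => by ring
  have hAN : |x ⬝ᵥ (A *ᵥ N ω)| ≤ s * (∑ i, ∑ j, |A i j|) * ‖N ω‖ := by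
    calc |x ⬝ᵥ (A *ᵥ N ω)| ≤ s * ∑ i, |(A *ᵥ N ω) i| := abs_dotProduct_le hx _
      _ ≤ s * ∑ i, (∑ j, |A i j|) * ‖N ω‖ := by
        gcongr with i
        exact abs_mulVec_le A (N ω) i
      _ = s * (∑ i, ∑ j, |A i j|) * ‖N ω‖ := by rw [← Finset.sum_mul, mul_assoc]
  have hsum : |∑ i, x i * (nmvmX μ γ A Z N ω i - rf)| ≤ s * ∑ i, |μ i - rf|
      + Z ω * (s * ∑ i, |γ i|) + Real.sqrt (Z ω) * (s * (∑ i, ∑ j, |A i j|) * ‖N ω‖) := by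
    rw [hsplit]
    refine (abs_add_three _ _ _).trans ?_
    rw [abs_mul, abs_mul, abs_of_nonneg hZ, abs_of_nonneg (Real.sqrt_nonneg _)]
    gcongr
    exacts [abs_dotProduct_le hx _, abs_dotProduct_le hx γ]
  calc wealth μ γ A Z N rf W0 x ω
      = W0 * (1 + rf) + W0 * ∑ i, x i * (nmvmX μ γ A Z N ω i - rf) := rfl
    _ ≤ |W0 * (1 + rf)| + |W0| * |∑ i, x i * (nmvmX μ γ A Z N ω i - rf)| := by
      rw [← abs_mul]
      exact add_le_add (le_abs_self _) (le_abs_self _)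
    _ ≤ |W0 * (1 + rf)| + |W0| * (s * ∑ i, |μ i - rf| + Z ω * (s * ∑ i, |γ i|)
        + Real.sqrt (Z ω) * (s * (∑ i, ∑ j, |A i j|) * ‖N ω‖)) := by gcongr
    _ = _ := by ring

lemma lintegral_utility_le_of_le_norm {Ω : Type*} [MeasurableSpace Ω] {P : Measure Ω}
    [IsFiniteMeasure P] {ι : Type*} [Fintype ι] {ν : Measure ℝ} [IsProbabilityMeasure ν]
    {Z Y : Ω → ℝ} {N : Ω → ι → ℝ} (hZ : Measurable Z) (hN : Measurable N) (hY : Measurable Y)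
    (hNlaw : P.map N = Measure.pi fun _ => ν) (hZN : IndepFun Z N P)
    (hYlaw : P.map Y = ν) (hZY : IndepFun Z Y P) {U : ℝ → ℝ} (hU : Monotone U)
    {f : Ω → ℝ} {a b c : ℝ} (hf : ∀ ω, f ω ≤ a + b * Z ω + c * Real.sqrt (Z ω) * ‖N ω‖) :
    ∫⁻ ω, ENNReal.ofReal (U (f ω)) ∂P ≤
      ∫⁻ ω, ENNReal.ofReal (U (a + b * Z ω + 0 * Real.sqrt (Z ω) * |Y ω|)) ∂P +
        Fintype.card ι *
          ∫⁻ ω, ENNReal.ofReal (U (a + b * Z ω + c * Real.sqrt (Z ω) * |Y ω|)) ∂P := by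
  set φ : ℝ × ℝ → ℝ≥0∞ := fun p => ENNReal.ofReal (U (a + b * p.1 + c * Real.sqrt p.1 * p.2))
  have hφ : Measurable φ := by
    have := hU.measurable
    fun_prop
  have hpt : ∀ ω, ENNReal.ofReal (U (f ω)) ≤ φ (Z ω, 0) + ∑ i, φ (Z ω, |N ω i|) := fun ω =>
    (ENNReal.ofReal_le_ofReal (hU (hf ω))).trans
      (apply_norm_le_apply_zero_add_sum (fun t => φ (Z ω, t)) (N ω))
  have hterm : ∀ i, ∫⁻ ω, φ (Z ω, |N ω i|) ∂P = ∫⁻ ω, φ (Z ω, |Y ω|) ∂P := fun i =>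
    ((identDistrib_prodMk_eval_of_map_eq_pi hZ hN hY hNlaw hZN hYlaw hZY i).comp
      (hφ.comp (measurable_fst.prodMk measurable_snd.abs))).lintegral_eq
  calc ∫⁻ ω, ENNReal.ofReal (U (f ω)) ∂P
      ≤ ∫⁻ ω, (φ (Z ω, 0) + ∑ i, φ (Z ω, |N ω i|)) ∂P := lintegral_mono hpt
    _ = ∫⁻ ω, φ (Z ω, 0) ∂P + ∑ i, ∫⁻ ω, φ (Z ω, |N ω i|) ∂P := by
      rw [lintegral_add_left (f := fun ω => φ (Z ω, 0)) (by fun_prop),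
        lintegral_finsetSum' _ fun i _ => by fun_prop]
    _ = _ := by
      simp only [hterm, Finset.sum_const, Finset.card_univ, nsmul_eq_mul, φ]
      congr 3 with ω
      simp

lemma abs_le_sqrt_sum_sq {ι : Type*} [Fintype ι] (x : ι → ℝ) (i : ι) :
    |x i| ≤ Real.sqrt (∑ j, x j ^ 2) := by
  rw [← Real.sqrt_sq_eq_abs]
  exact Real.sqrt_le_sqrt (Finset.single_le_sum (fun j _ => sq_nonneg (x j)) (Finset.mem_univ i))

theorem stmt14_general {Ω : Type*} [MeasurableSpace Ω] (P : Measure Ω) [IsProbabilityMeasure P]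
    {d : ℕ} (μ γ : Fin d → ℝ) (A : Matrix (Fin d) (Fin d) ℝ)
    (Z : Ω → ℝ) (N : Ω → Fin d → ℝ) (N1 : Ω → ℝ)
    (hZmeas : Measurable Z) (hNmeas : Measurable N) (hN1meas : Measurable N1)
    (hZnonneg : ∀ ω, 0 ≤ Z ω)
    (hNlaw : Measure.map N P = Measure.pi fun _ : Fin d => gaussianReal 0 1)
    (hindep : IndepFun Z N P)
    (hN1law : Measure.map N1 P = gaussianReal 0 1)
    (hindep1 : IndepFun Z N1 P)
    (rf W0 : ℝ)
    (U : ℝ → ℝ) (hUmono : Monotone U)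
    (hXdelta : ∀ δ₁ δ₂ δ₃ : ℝ, 0 ≤ δ₁ → 0 ≤ δ₂ → 0 ≤ δ₃ →
      (eexp P fun ω => U (δ₁ + δ₂ * Z ω + δ₃ * Real.sqrt (Z ω) * |N1 ω|)) < ⊤) :
    (∀ x : Fin d → ℝ, (eexp P fun ω => U (wealth μ γ A Z N rf W0 x ω)) < ⊤) ∧
    ((⨆ x : Fin d → ℝ, eexp P fun ω => U (wealth μ γ A Z N rf W0 x ω)) = ⊤ →
      ∃ xseq : ℕ → Fin d → ℝ,
        Tendsto (fun n => Real.sqrt (∑ i, xseq n i ^ 2)) atTop atTop ∧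
        Tendsto (fun n => eexp P fun ω => U (wealth μ γ A Z N rf W0 (xseq n) ω))
          atTop (𝓝 (⊤ : EReal)) ∧
        ∀ x : Fin d → ℝ, (eexp P fun ω => U (wealth μ γ A Z N rf W0 x ω)) < ⊤) := by
  have hXδ_fin : ∀ δ₁ δ₂ δ₃ : ℝ, 0 ≤ δ₁ → 0 ≤ δ₂ → 0 ≤ δ₃ →
      ∫⁻ ω, ENNReal.ofReal (U (δ₁ + δ₂ * Z ω + δ₃ * Real.sqrt (Z ω) * |N1 ω|)) ∂P ≠ ⊤ :=
    fun δ₁ δ₂ δ₃ h₁ h₂ h₃ => lintegral_ofReal_ne_top_of_eexp_lt_top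
      (fun ω => hUmono (by have := hZnonneg ω; positivity)) (hXdelta δ₁ δ₂ δ₃ h₁ h₂ h₃)
  have hbdd : ∀ n : ℕ, ∃ K : ℝ, ∀ x : Fin d → ℝ, Real.sqrt (∑ i, x i ^ 2) ≤ n →
      (eexp P fun ω => U (wealth μ γ A Z N rf W0 x ω)) ≤ K := by
    intro n
    obtain ⟨a, b, c, ha, hb, hc, hW⟩ := exists_wealth_le_of_abs_le μ γ A Z N rf W0 n.cast_nonneg
    have hK := ENNReal.add_ne_top.2 ⟨hXδ_fin a b 0 ha hb le_rfl,
      ENNReal.mul_ne_top (ENNReal.natCast_ne_top (Fintype.card (Fin d))) (hXδ_fin a b c ha hb hc)⟩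
    refine ⟨_, fun x hx => eexp_le_toReal_of_lintegral_le ?_ hK⟩
    exact lintegral_utility_le_of_le_norm hZmeas hNmeas hN1meas hNlaw hindep hN1law hindep1
      hUmono fun ω => hW x (fun i => (abs_le_sqrt_sum_sq x i).trans hx) ω (hZnonneg ω)
  have hfin : ∀ x : Fin d → ℝ, (eexp P fun ω => U (wealth μ γ A Z N rf W0 x ω)) < ⊤ := fun x =>
    have ⟨_, hK⟩ := hbdd ⌈Real.sqrt (∑ i, x i ^ 2)⌉₊
    (hK x (Nat.le_ceil _)).trans_lt (EReal.coe_lt_top _)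
  refine ⟨hfin, fun hsup => ?_⟩
  obtain ⟨xseq, hnorm, hutil⟩ := exists_seq_tendsto_top_of_iSup_eq_top hbdd hsup
  exact ⟨xseq, hnorm, hutil, hfin⟩

/-- if `E[U(X_δ)] < ∞` for all `δ = (δ₁,δ₂,δ₃) ≥ 0`, where
`X_δ = δ₁ + δ₂ Z + δ₃ √Z |N(0,1)|`, then `E[U(W(x))] < ∞` for every portfolio of finite
Euclidean norm; consequently if `sup_x E[U(W(x))] = +∞`, the economy admits an
asymptotically optimal portfolio. -/
theorem stmt14 {Ω : Type*} [MeasurableSpace Ω] (P : Measure Ω) [IsProbabilityMeasure P]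
    {d : ℕ} (μ γ : Fin d → ℝ) (A : Matrix (Fin d) (Fin d) ℝ)
    (Z : Ω → ℝ) (N : Ω → Fin d → ℝ) (N1 : Ω → ℝ)
    (hZmeas : Measurable Z) (hNmeas : Measurable N) (hN1meas : Measurable N1)
    (hZnonneg : ∀ ω, 0 ≤ Z ω)
    (hNlaw : Measure.map N P = Measure.pi fun _ : Fin d => gaussianReal 0 1)
    (hindep : IndepFun Z N P)
    (hN1law : Measure.map N1 P = gaussianReal 0 1)
    (hindep1 : IndepFun Z N1 P)
    (hPD : (A * Aᵀ).PosDef)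
    (rf W0 : ℝ) (hW0 : 0 < W0)
    (U : ℝ → ℝ) (hUmono : Monotone U)
    (hXdelta : ∀ δ₁ δ₂ δ₃ : ℝ, 0 ≤ δ₁ → 0 ≤ δ₂ → 0 ≤ δ₃ →
      (eexp P fun ω => U (δ₁ + δ₂ * Z ω + δ₃ * Real.sqrt (Z ω) * |N1 ω|)) < ⊤) :
    (∀ x : Fin d → ℝ, (eexp P fun ω => U (wealth μ γ A Z N rf W0 x ω)) < ⊤) ∧
    ((⨆ x : Fin d → ℝ, eexp P fun ω => U (wealth μ γ A Z N rf W0 x ω)) = ⊤ →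
      ∃ xseq : ℕ → Fin d → ℝ,
        Tendsto (fun n => Real.sqrt (∑ i, xseq n i ^ 2)) atTop atTop ∧
        Tendsto (fun n => eexp P fun ω => U (wealth μ γ A Z N rf W0 (xseq n) ω))
          atTop (𝓝 (⊤ : EReal)) ∧
        ∀ x : Fin d → ℝ, (eexp P fun ω => U (wealth μ γ A Z N rf W0 x ω)) < ⊤) :=
  stmt14_general P μ γ A Z N N1 hZmeas hNmeas hN1meas hZnonneg hNlaw hindep hN1law hindep1 rf W0 U
    hUmono hXdelta

end
end

section
/- If U: ℝ → ℝ is finite-valued, non-decreasing, bounded from below, and lim_{w→+∞} U(w) = +∞, then sup_{x∈ℝ^d} E[U(W(x))] = +∞. -/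
open MeasureTheory ProbabilityTheory Filter Matrix
open scoped ENNReal NNReal Topology

noncomputable section

/-! Take the portfolios `t • v` with `v = μ - 𝟏 r_f`. Their wealth is `W₀(1 + r_f) + t W₀ Y` with
`Y = v ⬝ v + (v ⬝ γ) Z + √Z (vᵀA) ⬝ N`. Since `A Aᵀ` is positive definite, `vᵀA ≠ 0`, so the event
`{Z ≤ K} ∩ {(vᵀA) ⬝ N > |v ⬝ γ| √K}` has positive probability: by independence, and because a
Gaussian law charges every nonempty open set. On it `√Z (vᵀA) ⬝ N ≥ |v ⬝ γ| Z`, so `Y ≥ v ⬝ v > 0`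
and the wealth tends to `+∞` uniformly in `ω`. As `U` is bounded below and tends to `+∞`, the
expected utility is then unbounded. -/

lemma isOpenPosMeasure_gaussianReal (m : ℝ) {v : ℝ≥0} (hv : v ≠ 0) :
    (gaussianReal m v).IsOpenPosMeasure :=
  (gaussianReal_absolutelyContinuous' m hv).isOpenPosMeasure

lemma measure_dotProduct_gt_pos {ι : Type*} [Fintype ι] {ν : Measure (ι → ℝ)}
    [ν.IsOpenPosMeasure] {w : ι → ℝ} (hw : w ≠ 0) (s : ℝ) :
    0 < ν {n | s < w ⬝ᵥ n} := by
  refine (isOpen_lt continuous_const (by fun_prop)).measure_pos ν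
    ⟨((|s| + 1) / (w ⬝ᵥ w)) • w, ?_⟩
  have hww : w ⬝ᵥ w ≠ 0 := dotProduct_self_eq_zero.not.mpr hw
  simp only [Set.mem_ofPred_eq, dotProduct_smul, smul_eq_mul, div_mul_cancel₀ _ hww]
  linarith [le_abs_self s]

lemma vecMul_ne_zero_of_posDef_mul_transpose {m n : Type*} [Fintype m] [Fintype n]
    {A : Matrix m n ℝ} (hA : (A * Aᵀ).PosDef) {v : m → ℝ} (hv : v ≠ 0) : v ᵥ* A ≠ 0 := by
  intro h
  have := hA.dotProduct_mulVec_pos hv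
  rw [← mulVec_mulVec, mulVec_transpose, h, mulVec_zero, dotProduct_zero] at this
  exact this.false

lemma exists_measure_le_pos {Ω : Type*} [MeasurableSpace Ω] (P : Measure Ω) [NeZero P]
    (Z : Ω → ℝ) : ∃ K : ℝ, 0 < P {ω | Z ω ≤ K} := by
  by_contra! h
  have hcover : (⋃ n : ℕ, {ω | Z ω ≤ n}) = Set.univ :=
    Set.eq_univ_of_forall fun ω => Set.mem_iUnion.mpr (exists_nat_ge (Z ω))
  have := measure_iUnion_null fun n : ℕ => nonpos_iff_eq_zero.mp (h n)
  rw [hcover, Measure.measure_univ_eq_zero] at this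
  exact NeZero.ne P this

lemma le_add_mul_add_sqrt_mul {a b z K S : ℝ} (hz : 0 ≤ z) (hzK : z ≤ K)
    (hS : |b| * √K ≤ S) : a ≤ a + b * z + √z * S := by
  have hbz : -(b * z) ≤ √z * S :=
    calc -(b * z) ≤ |b| * z := by nlinarith [neg_abs_le b]
      _ = √z * (|b| * √z) := by rw [mul_left_comm, Real.mul_self_sqrt hz]
      _ ≤ √z * S := mul_le_mul_of_nonneg_left
          ((mul_le_mul_of_nonneg_left (Real.sqrt_le_sqrt hzK) (abs_nonneg b)).trans hS)
          (Real.sqrt_nonneg z)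
  linarith

lemma exists_measure_ne_zero_forall_le {Ω ι : Type*} [MeasurableSpace Ω] [Fintype ι]
    (P : Measure Ω) [NeZero P] {Z : Ω → ℝ} {N : Ω → ι → ℝ}
    (hZ : Measurable Z) (hN : Measurable N) (hZnonneg : ∀ ω, 0 ≤ Z ω)
    (hNpos : (P.map N).IsOpenPosMeasure) (hindep : IndepFun Z N P)
    {w : ι → ℝ} (hw : w ≠ 0) (a b : ℝ) :
    ∃ E, MeasurableSet E ∧ P E ≠ 0 ∧ ∀ ω ∈ E, a ≤ a + b * Z ω + √(Z ω) * (w ⬝ᵥ N ω) := by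
  obtain ⟨K, hK⟩ := exists_measure_le_pos P Z
  set B := {n : ι → ℝ | |b| * √K < w ⬝ᵥ n}
  have hB : MeasurableSet B := measurableSet_lt measurable_const (by fun_prop)
  have hNB : 0 < P (N ⁻¹' B) := by
    rw [← Measure.map_apply hN hB]
    exact measure_dotProduct_gt_pos hw _
  refine ⟨Z ⁻¹' Set.Iic K ∩ N ⁻¹' B, (hZ measurableSet_Iic).inter (hN hB), ?_, ?_⟩
  · rw [hindep.measure_inter_preimage_eq_mul _ _ measurableSet_Iic hB]
    exact mul_ne_zero hK.ne' hNB.ne'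
  · rintro ω ⟨hZK, hNω⟩
    exact le_add_mul_add_sqrt_mul (hZnonneg ω) hZK hNω.le

lemma coe_le_eexp {Ω : Type*} [MeasurableSpace Ω] (P : Measure Ω) [IsProbabilityMeasure P]
    {f : Ω → ℝ} {E : Set Ω} (hE : MeasurableSet E) {m M : ℝ} (hm : m ≤ 0) (hM : 0 ≤ M)
    (hfm : ∀ ω, m ≤ f ω) (hfM : ∀ ω ∈ E, M ≤ f ω) :
    ((M * P.real E + m : ℝ) : EReal) ≤ eexp P f := by
  have hpos : ENNReal.ofReal (M * P.real E) ≤ ∫⁻ ω, ENNReal.ofReal (f ω) ∂P :=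
    calc ENNReal.ofReal (M * P.real E) = ∫⁻ _ in E, ENNReal.ofReal M ∂P := by
          rw [setLIntegral_const, ENNReal.ofReal_mul hM, ofReal_measureReal]
      _ ≤ ∫⁻ ω in E, ENNReal.ofReal (f ω) ∂P :=
          setLIntegral_mono' hE fun ω hω => ENNReal.ofReal_le_ofReal (hfM ω hω)
      _ ≤ ∫⁻ ω, ENNReal.ofReal (f ω) ∂P := setLIntegral_le_lintegral _ _
  have hneg : ∫⁻ ω, ENNReal.ofReal (-f ω) ∂P ≤ ENNReal.ofReal (-m) :=
    calc ∫⁻ ω, ENNReal.ofReal (-f ω) ∂P ≤ ∫⁻ _, ENNReal.ofReal (-m) ∂P :=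
          lintegral_mono fun ω => ENNReal.ofReal_le_ofReal (neg_le_neg (hfm ω))
      _ = ENNReal.ofReal (-m) := by simp
  refine le_trans ?_ (EReal.sub_le_sub (EReal.coe_ennreal_le_coe_ennreal_iff.mpr hpos)
    (EReal.coe_ennreal_le_coe_ennreal_iff.mpr hneg))
  rw [EReal.coe_ennreal_ofReal, EReal.coe_ennreal_ofReal,
    max_eq_left (mul_nonneg hM measureReal_nonneg), max_eq_left (neg_nonneg.mpr hm),
    ← EReal.coe_sub, sub_neg_eq_add]

lemma iSup_eexp_eq_top {Ω ι : Type*} [MeasurableSpace Ω] (P : Measure Ω)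
    [IsProbabilityMeasure P] {f : ι → Ω → ℝ} {E : Set Ω} (hE : MeasurableSet E) (hPE : P E ≠ 0)
    (hbdd : BddBelow (⋃ i, Set.range (f i))) (hf : ∀ M, ∃ i, ∀ ω ∈ E, M ≤ f i ω) :
    ⨆ i, eexp P (f i) = ⊤ := by
  obtain ⟨m, hm⟩ := hbdd
  have hfm : ∀ i ω, min m 0 ≤ f i ω := fun i ω =>
    (min_le_left m 0).trans (hm (Set.mem_iUnion.mpr ⟨i, ω, rfl⟩))
  have hp : 0 < P.real E := ENNReal.toReal_pos hPE (measure_ne_top P E)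
  rw [iSup_eq_top]
  intro c hc
  obtain ⟨r, hcr, -⟩ := EReal.exists_between_coe_real hc
  set M := max 0 ((r - min m 0) / P.real E)
  obtain ⟨i, hi⟩ := hf M
  refine ⟨i, hcr.trans_le (le_trans ?_ (coe_le_eexp P hE (min_le_right m 0) (le_max_left _ _)
    (hfm i) hi))⟩
  have : r - min m 0 ≤ M * P.real E := (div_le_iff₀ hp).mp (le_max_right _ _)
  exact EReal.coe_le_coe_iff.mpr (by linarith)

lemma exists_forall_le_add_mul {Ω : Type*} {Y : Ω → ℝ} {E : Set Ω} {a : ℝ} (ha : 0 < a)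
    (hY : ∀ ω ∈ E, a ≤ Y ω) (c R : ℝ) : ∃ t : ℝ, ∀ ω ∈ E, R ≤ c + t * Y ω := by
  refine ⟨max 0 ((R - c) / a), fun ω hω => ?_⟩
  have h₁ : R - c ≤ max 0 ((R - c) / a) * a := (div_le_iff₀ ha).mp (le_max_right _ _)
  have h₂ := mul_le_mul_of_nonneg_left (hY ω hω) (le_max_left 0 ((R - c) / a))
  linarith

section Portfolio

variable {Ω : Type*} {d : ℕ} (μ γ : Fin d → ℝ) (A : Matrix (Fin d) (Fin d) ℝ)
  (Z : Ω → ℝ) (N : Ω → Fin d → ℝ)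

lemma sum_mul_nmvmX_sub (rf : ℝ) (x : Fin d → ℝ) (ω : Ω) :
    ∑ i, x i * (nmvmX μ γ A Z N ω i - rf) =
      x ⬝ᵥ (fun i => μ i - rf) + (x ⬝ᵥ γ) * Z ω + √(Z ω) * ((x ᵥ* A) ⬝ᵥ N ω) := by
  rw [← dotProduct_mulVec]
  simp only [nmvmX, dotProduct, Finset.mul_sum, Finset.sum_mul, ← Finset.sum_add_distrib]
  exact Finset.sum_congr rfl fun i _ => by ring

lemma wealth_smul (rf W0 t : ℝ) (x : Fin d → ℝ) (ω : Ω) :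
    wealth μ γ A Z N rf W0 (t • x) ω =
      W0 * (1 + rf) + t * (W0 * ∑ i, x i * (nmvmX μ γ A Z N ω i - rf)) := by
  simp only [wealth, Pi.smul_apply, smul_eq_mul, mul_assoc, ← Finset.mul_sum]
  ring

end Portfolio

theorem stmt16_general {Ω : Type*} [MeasurableSpace Ω] (P : Measure Ω) [IsProbabilityMeasure P]
    {d : ℕ} (μ γ : Fin d → ℝ) (A : Matrix (Fin d) (Fin d) ℝ)
    (Z : Ω → ℝ) (N : Ω → Fin d → ℝ)
    (hZmeas : Measurable Z) (hNmeas : Measurable N)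
    (hZnonneg : ∀ ω, 0 ≤ Z ω)
    (hNlaw : Measure.map N P = Measure.pi fun _ : Fin d => gaussianReal 0 1)
    (hindep : IndepFun Z N P)
    (hPD : (A * Aᵀ).PosDef)
    (rf W0 : ℝ) (hW0 : 0 < W0)
    (hμrf : (fun i => μ i - rf) ≠ 0)
    (U : ℝ → ℝ) (hUbdd : BddBelow (Set.range U))
    (hUtop : Tendsto U atTop atTop) :
    (⨆ x : Fin d → ℝ, eexp P fun ω => U (wealth μ γ A Z N rf W0 x ω)) = ⊤ := by
  set v : Fin d → ℝ := fun i => μ i - rf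
  have hN : (P.map N).IsOpenPosMeasure := by
    have := isOpenPosMeasure_gaussianReal 0 one_ne_zero
    rw [hNlaw]
    infer_instance
  obtain ⟨E, hE, hPE, hYE⟩ := exists_measure_ne_zero_forall_le P hZmeas hNmeas hZnonneg hN
    hindep (vecMul_ne_zero_of_posDef_mul_transpose hPD hμrf) (v ⬝ᵥ v) (v ⬝ᵥ γ)
  have hvv : 0 < v ⬝ᵥ v := by simpa using dotProduct_self_star_pos_iff.mpr hμrf
  refine iSup_eexp_eq_top P (f := fun x ω => U (wealth μ γ A Z N rf W0 x ω)) hE hPE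
    (hUbdd.mono (Set.iUnion_subset fun x => Set.range_comp_subset_range _ U)) fun M => ?_
  obtain ⟨R, hR⟩ := eventually_atTop.mp (tendsto_atTop.mp hUtop M)
  obtain ⟨t, ht⟩ := exists_forall_le_add_mul (mul_pos hW0 hvv)
    (fun ω hω => mul_le_mul_of_nonneg_left
      ((hYE ω hω).trans_eq (sum_mul_nmvmX_sub μ γ A Z N rf v ω).symm) hW0.le) (W0 * (1 + rf)) R
  exact ⟨t • v, fun ω hω => hR _ ((ht ω hω).trans_eq (wealth_smul μ γ A Z N rf W0 t v ω).symm)⟩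

/-- if `U` is finite-valued, non-decreasing, bounded from below and
`U(w) → +∞` as `w → +∞`, then `sup_x E[U(W(x))] = +∞`. -/
theorem stmt16 {Ω : Type*} [MeasurableSpace Ω] (P : Measure Ω) [IsProbabilityMeasure P]
    {d : ℕ} (μ γ : Fin d → ℝ) (A : Matrix (Fin d) (Fin d) ℝ)
    (Z : Ω → ℝ) (N : Ω → Fin d → ℝ)
    (hZmeas : Measurable Z) (hNmeas : Measurable N)
    (hZnonneg : ∀ ω, 0 ≤ Z ω)
    (hNlaw : Measure.map N P = Measure.pi fun _ : Fin d => gaussianReal 0 1)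
    (hindep : IndepFun Z N P)
    (hPD : (A * Aᵀ).PosDef)
    (rf W0 : ℝ) (hW0 : 0 < W0)
    (hμrf : (fun i => μ i - rf) ≠ 0)
    (U : ℝ → ℝ) (hUmono : Monotone U) (hUbdd : BddBelow (Set.range U))
    (hUtop : Tendsto U atTop atTop) :
    (⨆ x : Fin d → ℝ, eexp P fun ω => U (wealth μ γ A Z N rf W0 x ω)) = ⊤ :=
  stmt16_general P μ γ A Z N hZmeas hNmeas hZnonneg hNlaw hindep hPD rf W0 hW0 hμrf U hUbdd hUtop

end
end

section
/- If U: ℝ → ℝ is finite-valued, continuous, non-decreasing, bounded from above, lim_{w→−∞} U(w) = −∞, and P(Z > 0) > 0, then the supremum sup_{x∈ℝ^d} E[U(W(x))] is finite and attained: there exists a portfolio x₀ ∈ ℝ^d with finite Euclidean norm such that E[U(W(x₀))] = sup_{x∈ℝ^d} E[U(W(x))]. -/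
/-!
Fix an upper bound `M ≥ 0` of `U` and put `L(x) = E[(M - U(W(x)))⁺] ∈ [0, ∞]`, so that
`E[U(W(x))] = M - L(x)` and the problem is to minimise `L`. By Fatou's lemma `L` is lower
semicontinuous. It is also coercive. With positive probability `Z` lies in a compact interval
`[z₀, z₁] ⊂ (0, ∞)`. Independently of `Z`, the Gaussian part `(Aᵀx)ᵀN` of the excess return lies
below `-T‖Aᵀx‖₂` with probability at least `Φ(-T)` for every `x`, by rotation invariance of the
standard Gaussian. As `A` is invertible, `‖Aᵀx‖₂ ≥ κ‖x‖`, so for `T` large the noise beats the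
drift `xᵀ(μ - 𝟏r_f) + xᵀγ Z` and `W(x) ≤ W₀(1 + r_f) - W₀‖x‖` on that event, giving
`L(x) ≥ δ (M - U(W₀(1 + r_f) - W₀‖x‖)) → ∞`. Hence `L` attains its minimum, which is at most
`L(0) < ∞`.
-/

open MeasureTheory ProbabilityTheory Filter Matrix
open scoped ENNReal NNReal Topology

noncomputable section

theorem LowerSemicontinuous.exists_forall_le' {β α : Type*} [TopologicalSpace β] [LinearOrder α]
    {f : β → α} (hf : LowerSemicontinuous f) (x₀ : β) (h : ∀ᶠ x in cocompact β, f x₀ ≤ f x) :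
    ∃ x, ∀ y, f x ≤ f y := by
  obtain ⟨K, hK, hKf⟩ := hasBasis_cocompact.eventually_iff.1 h
  obtain ⟨x, -, hxf⟩ := (hf.lowerSemicontinuousOn _).exists_isMinOn (Set.insert_nonempty x₀ K)
    (hK.insert x₀)
  refine ⟨x, fun y => ?_⟩
  by_cases hyK : y ∈ K
  exacts [hxf (Set.mem_insert_of_mem _ hyK), (hxf (Set.mem_insert x₀ K)).trans (hKf hyK)]

theorem lowerSemicontinuous_lintegral {X α : Type*} [TopologicalSpace X] [FirstCountableTopology X]
    [MeasurableSpace α] {μ : Measure α} {F : X → α → ℝ≥0∞} (hmeas : ∀ x, Measurable (F x))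
    (hF : ∀ a, LowerSemicontinuous (F · a)) : LowerSemicontinuous fun x => ∫⁻ a, F x a ∂μ := by
  refine lowerSemicontinuous_iff_le_liminf.2 fun x => ?_
  calc ∫⁻ a, F x a ∂μ ≤ ∫⁻ a, liminf (F · a) (𝓝 x) ∂μ := lintegral_mono fun a => (hF a).le_liminf x
    _ ≤ liminf (fun y => ∫⁻ a, F y a ∂μ) (𝓝 x) := lintegral_liminf_le hmeas

theorem tendsto_lintegral_ofReal_sub_comp_cocompact {E Ω : Type*} [NormedAddCommGroup E]
    [ProperSpace E] [MeasurableSpace Ω] {P : Measure Ω} {F : E → Ω → ℝ} {U : ℝ → ℝ}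
    (hmeas : ∀ x, Measurable fun ω => U (F x ω)) (hUmono : Monotone U)
    (hUbot : Tendsto U atBot atBot) (M w : ℝ) {c : ℝ} (hc : 0 < c) {δ : ℝ≥0∞} (hδ : δ ≠ 0)
    (hdown : ∀ x, δ ≤ P {ω | F x ω ≤ w - c * ‖x‖}) :
    Tendsto (fun x => ∫⁻ ω, ENNReal.ofReal (M - U (F x ω)) ∂P) (cocompact E) (𝓝 ⊤) := by
  have hlow : ∀ x, δ * ENNReal.ofReal (M - U (w - c * ‖x‖)) ≤
      ∫⁻ ω, ENNReal.ofReal (M - U (F x ω)) ∂P := fun x =>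
    calc δ * ENNReal.ofReal (M - U (w - c * ‖x‖))
        ≤ ENNReal.ofReal (M - U (w - c * ‖x‖)) *
            P {ω | ENNReal.ofReal (M - U (w - c * ‖x‖)) ≤ ENNReal.ofReal (M - U (F x ω))} := by
          rw [mul_comm]
          gcongr
          exact (hdown x).trans (measure_mono fun ω hω =>
            ENNReal.ofReal_le_ofReal (sub_le_sub_left (hUmono hω) M))
      _ ≤ _ := mul_meas_ge_le_lintegral₀ ((hmeas x).const_sub M).ennreal_ofReal.aemeasurable _
  have hshift : Tendsto (fun x : E => w - c * ‖x‖) (cocompact E) atBot := by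
    simpa [sub_eq_add_neg] using tendsto_atBot_add_const_left _ w
      (tendsto_neg_atTop_atBot.comp (tendsto_norm_cocompact_atTop.const_mul_atTop hc))
  have hshortfall : Tendsto (fun x : E => M - U (w - c * ‖x‖)) (cocompact E) atTop := by
    simpa [sub_eq_add_neg] using tendsto_atTop_add_const_left _ M
      (tendsto_neg_atBot_atTop.comp (hUbot.comp hshift))
  refine tendsto_nhds_top_mono ?_ (Eventually.of_forall hlow)
  simpa [ENNReal.mul_top hδ] using ENNReal.Tendsto.const_mul (a := δ)
    (ENNReal.tendsto_ofReal_atTop.comp hshortfall) (Or.inl ENNReal.top_ne_zero)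

theorem ENNReal.ofReal_sub_add_ofReal {t M : ℝ} (hM : 0 ≤ M) (ht : t ≤ M) :
    ENNReal.ofReal (M - t) + ENNReal.ofReal t = ENNReal.ofReal M + ENNReal.ofReal (-t) := by
  rcases le_or_gt 0 t with h | h
  · rw [ENNReal.ofReal_of_nonpos (neg_nonpos.2 h), add_zero, ← ENNReal.ofReal_add (by linarith) h,
      sub_add_cancel]
  · rw [ENNReal.ofReal_of_nonpos h.le, add_zero, ← ENNReal.ofReal_add hM (by linarith),
      sub_eq_add_neg]

theorem ENNReal.toEReal_sub_eq_of_add_eq {a b c m : ℝ≥0∞} (ha : a ≠ ⊤) (hm : m ≠ ⊤)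
    (h : c + a = m + b) : (a : EReal) - b = m - c := by
  rcases eq_or_ne b ⊤ with rfl | hb
  · have hc : c = ⊤ := by simpa [ha] using h
    simp [hc]
  · have hc : c ≠ ⊤ := fun hc => ENNReal.add_ne_top.2 ⟨hm, hb⟩ (by rw [← h, hc, top_add])
    lift a to ℝ≥0 using ha
    lift b to ℝ≥0 using hb
    lift c to ℝ≥0 using hc
    lift m to ℝ≥0 using hm
    have h' : (c : ℝ) + a = m + b := by exact_mod_cast h
    simp only [EReal.coe_nnreal_eq_coe_real, ← EReal.coe_sub, EReal.coe_eq_coe_iff]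
    linarith

theorem eexp_eq_sub_lintegral {Ω : Type*} [MeasurableSpace Ω] {P : Measure Ω}
    [IsProbabilityMeasure P] {f : Ω → ℝ} {M : ℝ} (hf : Measurable f) (hM : 0 ≤ M)
    (hfM : ∀ ω, f ω ≤ M) : eexp P f = (M : EReal) - ∫⁻ ω, ENNReal.ofReal (M - f ω) ∂P := by
  have hM' : ((ENNReal.ofReal M : ℝ≥0∞) : EReal) = M := by
    rw [EReal.coe_ennreal_ofReal, max_eq_left hM]
  rw [eexp, ← hM']
  refine ENNReal.toEReal_sub_eq_of_add_eq ?_ ENNReal.ofReal_ne_top ?_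
  · refine ne_top_of_le_ne_top (ENNReal.ofReal_ne_top (r := M)) ?_
    calc ∫⁻ ω, ENNReal.ofReal (f ω) ∂P ≤ ∫⁻ _, ENNReal.ofReal M ∂P :=
          lintegral_mono fun ω => ENNReal.ofReal_le_ofReal (hfM ω)
      _ = ENNReal.ofReal M := by simp
  · rw [← lintegral_add_left (hf.const_sub M).ennreal_ofReal]
    calc _ = ∫⁻ ω, (ENNReal.ofReal M + ENNReal.ofReal (-f ω)) ∂P :=
          lintegral_congr fun ω => ENNReal.ofReal_sub_add_ofReal hM (hfM ω)
      _ = _ := by rw [lintegral_add_left measurable_const]; simp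

theorem exists_measure_preimage_Icc_ne_zero {Ω : Type*} [MeasurableSpace Ω] {P : Measure Ω}
    {Z : Ω → ℝ} (hZ : P {ω | 0 < Z ω} ≠ 0) : ∃ a > 0, ∃ b, P (Z ⁻¹' Set.Icc a b) ≠ 0 := by
  have hcover : {ω | 0 < Z ω} ⊆ ⋃ n : ℕ, Z ⁻¹' Set.Icc ((n : ℝ) + 1)⁻¹ (n + 1) := by
    intro ω (hω : 0 < Z ω)
    obtain ⟨n, hn⟩ := exists_nat_gt (max (Z ω) (Z ω)⁻¹)
    refine Set.mem_iUnion.2 ⟨n, ?_, ?_⟩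
    · rw [inv_le_comm₀ (by positivity) hω]
      linarith [le_max_right (Z ω) (Z ω)⁻¹]
    · linarith [le_max_left (Z ω) (Z ω)⁻¹]
  obtain ⟨n, hn⟩ := exists_measure_pos_of_not_measure_iUnion_null
    fun h => hZ (measure_mono_null hcover h)
  exact ⟨_, by positivity, _, hn.ne'⟩

open WithLp in
theorem map_pi_gaussianReal_dotProduct {ι : Type*} [Fintype ι] (v : ι → ℝ) :
    (Measure.pi fun _ : ι => gaussianReal 0 1).map (v ⬝ᵥ ·) =
      gaussianReal 0 (‖toLp 2 v‖₊ ^ 2) := by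
  have : (v ⬝ᵥ ·) = innerSL ℝ (toLp 2 v) ∘ toLp 2 := by
    ext n; simp [dotProduct, EuclideanSpace.inner_eq_star_dotProduct, mul_comm]
  rw [this, ← Measure.map_map (by fun_prop) (by fun_prop), map_pi_eq_stdGaussian,
    IsGaussian.map_eq_gaussianReal, variance_dual_stdGaussian, innerSL_apply_norm]
  congr 1
  · exact integral_strongDual_stdGaussian _
  · ext; simp

open WithLp in
theorem gaussianReal_Iic_le_pi_dotProduct_le {ι : Type*} [Fintype ι] (v : ι → ℝ) (T : ℝ) :
    gaussianReal 0 1 (Set.Iic (-T)) ≤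
      (Measure.pi fun _ : ι => gaussianReal 0 1) {n | v ⬝ᵥ n ≤ -T * ‖toLp 2 v‖} := by
  rcases eq_or_ne v 0 with rfl | hv
  · simp [prob_le_one]
  have hσ : 0 < ‖toLp 2 v‖ := by simpa using hv
  have hscale : gaussianReal 0 (‖toLp 2 v‖₊ ^ 2) = (gaussianReal 0 1).map (‖toLp 2 v‖ * ·) := by
    rw [gaussianReal_map_const_mul]
    congr 1
    · simp
    · ext; simp
  have hset : {n : ι → ℝ | v ⬝ᵥ n ≤ -T * ‖toLp 2 v‖} = (v ⬝ᵥ ·) ⁻¹' Set.Iic (-T * ‖toLp 2 v‖) :=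
    rfl
  rw [hset, ← Measure.map_apply (by fun_prop) measurableSet_Iic, map_pi_gaussianReal_dotProduct,
    hscale, Measure.map_apply (by fun_prop) measurableSet_Iic]
  refine le_of_eq (congrArg _ (Set.ext fun t => ?_))
  rw [Set.mem_preimage, Set.mem_Iic, Set.mem_Iic, neg_mul, mul_comm T, ← mul_neg,
    mul_le_mul_iff_of_pos_left hσ]

theorem abs_dotProduct_le_sum_abs_mul_norm {ι : Type*} [Fintype ι] (x b : ι → ℝ) :
    |x ⬝ᵥ b| ≤ (∑ i, |b i|) * ‖x‖ :=
  calc |x ⬝ᵥ b| ≤ ∑ i, |x i * b i| := Finset.abs_sum_le_sum_abs _ _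
    _ ≤ ∑ i, |b i| * ‖x‖ := Finset.sum_le_sum fun i _ => by
        rw [abs_mul, mul_comm, ← Real.norm_eq_abs (x i)]
        exact mul_le_mul_of_nonneg_left (norm_le_pi_norm x i) (abs_nonneg _)
    _ = (∑ i, |b i|) * ‖x‖ := (Finset.sum_mul _ _ _).symm

theorem Matrix.exists_pos_mul_norm_le_norm_toLp_vecMul {ι : Type*} [Fintype ι] [DecidableEq ι]
    {A : Matrix ι ι ℝ} (hA : IsUnit A) :
    ∃ κ > 0, ∀ x : ι → ℝ, κ * ‖x‖ ≤ ‖WithLp.toLp 2 (x ᵥ* A)‖ := by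
  let f : (ι → ℝ) →ₗ[ℝ] EuclideanSpace ℝ ι :=
    (WithLp.linearEquiv 2 ℝ (ι → ℝ)).symm.toLinearMap ∘ₗ A.vecMulLinear
  have hinj : Function.Injective f :=
    (WithLp.linearEquiv 2 ℝ (ι → ℝ)).symm.injective.comp (vecMul_injective_of_isUnit hA)
  obtain ⟨K, hK, hf⟩ := f.exists_antilipschitzWith (LinearMap.ker_eq_bot.2 hinj)
  refine ⟨K⁻¹, by positivity, fun x => ?_⟩
  rw [inv_mul_le_iff₀ (by positivity)]
  exact ZeroHomClass.bound_of_antilipschitz f hf x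

section Wealth

open WithLp

variable {Ω : Type*} {d : ℕ} {μ γ : Fin d → ℝ} {A : Matrix (Fin d) (Fin d) ℝ} {Z : Ω → ℝ}
  {N : Ω → Fin d → ℝ} {rf W0 : ℝ}

theorem wealth_eq (x : Fin d → ℝ) (ω : Ω) :
    wealth μ γ A Z N rf W0 x ω = W0 * (1 + rf) + W0 * (x ⬝ᵥ (fun i => μ i - rf) +
      (x ⬝ᵥ γ) * Z ω + Real.sqrt (Z ω) * ((x ᵥ* A) ⬝ᵥ N ω)) := by
  rw [wealth, ← dotProduct_mulVec]
  simp only [nmvmX, dotProduct, Finset.mul_sum, Finset.sum_mul, ← Finset.sum_add_distrib]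
  congr 2; ext i; ring

theorem continuous_wealth (ω : Ω) : Continuous fun x => wealth μ γ A Z N rf W0 x ω := by
  unfold wealth; fun_prop

theorem measurable_wealth [MeasurableSpace Ω] (hZ : Measurable Z) (hN : Measurable N)
    (x : Fin d → ℝ) : Measurable (wealth μ γ A Z N rf W0 x) := by
  unfold wealth nmvmX
  fun_prop

theorem wealth_le_sub_mul_norm {z₀ z₁ κ : ℝ} {x : Fin d → ℝ} {ω : Ω} (hW0 : 0 ≤ W0)
    (hz₀ : 0 < z₀) (hκ : 0 < κ)
    (hAκ : κ * ‖x‖ ≤ ‖toLp 2 (x ᵥ* A)‖) (hZ : Z ω ∈ Set.Icc z₀ z₁)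
    (hN : (x ᵥ* A) ⬝ᵥ N ω ≤
      -((∑ i, |μ i - rf| + z₁ * ∑ i, |γ i| + 1) / (Real.sqrt z₀ * κ)) * ‖toLp 2 (x ᵥ* A)‖) :
    wealth μ γ A Z N rf W0 x ω ≤ W0 * (1 + rf) - W0 * ‖x‖ := by
  set C := ∑ i, |μ i - rf| + z₁ * ∑ i, |γ i|
  have hz₁ : 0 ≤ z₁ := hz₀.le.trans (hZ.1.trans hZ.2)
  have hdrift : x ⬝ᵥ (fun i => μ i - rf) + (x ⬝ᵥ γ) * Z ω ≤ C * ‖x‖ := by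
    have h1 := (le_abs_self _).trans (abs_dotProduct_le_sum_abs_mul_norm x fun i => μ i - rf)
    have h2 : (x ⬝ᵥ γ) * Z ω ≤ (∑ i, |γ i|) * ‖x‖ * z₁ :=
      calc (x ⬝ᵥ γ) * Z ω ≤ |x ⬝ᵥ γ| * Z ω :=
            mul_le_mul_of_nonneg_right (le_abs_self _) (hz₀.le.trans hZ.1)
        _ ≤ (∑ i, |γ i|) * ‖x‖ * z₁ :=
            mul_le_mul (abs_dotProduct_le_sum_abs_mul_norm x γ) hZ.2 (hz₀.le.trans hZ.1)
              (by positivity)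
    linarith
  have hnoise : Real.sqrt (Z ω) * ((x ᵥ* A) ⬝ᵥ N ω) ≤ -((C + 1) * ‖x‖) := by
    have hT : 0 ≤ (C + 1) / (Real.sqrt z₀ * κ) := by positivity
    have hNκ : (x ᵥ* A) ⬝ᵥ N ω ≤ -((C + 1) / (Real.sqrt z₀ * κ)) * (κ * ‖x‖) :=
      hN.trans (mul_le_mul_of_nonpos_left hAκ (neg_nonpos.2 hT))
    have hneg : (x ᵥ* A) ⬝ᵥ N ω ≤ 0 :=
      hNκ.trans (mul_nonpos_of_nonpos_of_nonneg (neg_nonpos.2 hT) (by positivity))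
    calc Real.sqrt (Z ω) * ((x ᵥ* A) ⬝ᵥ N ω) ≤ Real.sqrt z₀ * ((x ᵥ* A) ⬝ᵥ N ω) :=
          mul_le_mul_of_nonpos_right (Real.sqrt_le_sqrt hZ.1) hneg
      _ ≤ Real.sqrt z₀ * (-((C + 1) / (Real.sqrt z₀ * κ)) * (κ * ‖x‖)) :=
          mul_le_mul_of_nonneg_left hNκ (Real.sqrt_nonneg _)
      _ = -((C + 1) * ‖x‖) := by
          have : 0 < Real.sqrt z₀ := Real.sqrt_pos.2 hz₀
          field_simp
  rw [wealth_eq]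
  have := mul_le_mul_of_nonneg_left (add_le_add hdrift hnoise) hW0
  linarith

theorem exists_forall_le_measure_wealth_le [MeasurableSpace Ω] {P : Measure Ω}
    (hNmeas : Measurable N) (hZpos : P {ω | 0 < Z ω} ≠ 0)
    (hNlaw : Measure.map N P = Measure.pi fun _ : Fin d => gaussianReal 0 1)
    (hindep : IndepFun Z N P) (hA : IsUnit A) (hW0 : 0 ≤ W0) :
    ∃ δ : ℝ≥0∞, δ ≠ 0 ∧
      ∀ x, δ ≤ P {ω | wealth μ γ A Z N rf W0 x ω ≤ W0 * (1 + rf) - W0 * ‖x‖} := by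
  obtain ⟨z₀, hz₀, z₁, hZ⟩ := exists_measure_preimage_Icc_ne_zero hZpos
  obtain ⟨κ, hκ, hAκ⟩ := Matrix.exists_pos_mul_norm_le_norm_toLp_vecMul hA
  -- chosen so that `√z₀ * T * κ` exceeds the drift bound `∑ |μ i - rf| + z₁ ∑ |γ i|` by one
  set T := (∑ i, |μ i - rf| + z₁ * ∑ i, |γ i| + 1) / (Real.sqrt z₀ * κ)
  have hgauss : gaussianReal 0 1 (Set.Iic (-T)) ≠ 0 := fun h => by
    simpa using gaussianReal_absolutelyContinuous' 0 one_ne_zero h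
  refine ⟨P (Z ⁻¹' Set.Icc z₀ z₁) * gaussianReal 0 1 (Set.Iic (-T)), mul_ne_zero hZ hgauss,
    fun x => ?_⟩
  set H := {n : Fin d → ℝ | (x ᵥ* A) ⬝ᵥ n ≤ -T * ‖toLp 2 (x ᵥ* A)‖}
  have hH : MeasurableSet H := measurableSet_le (by fun_prop) (by fun_prop)
  calc P (Z ⁻¹' Set.Icc z₀ z₁) * gaussianReal 0 1 (Set.Iic (-T))
      ≤ P (Z ⁻¹' Set.Icc z₀ z₁) * P (N ⁻¹' H) := by
        rw [← Measure.map_apply hNmeas hH, hNlaw]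
        gcongr
        exact gaussianReal_Iic_le_pi_dotProduct_le _ _
    _ = P (Z ⁻¹' Set.Icc z₀ z₁ ∩ N ⁻¹' H) :=
        (hindep.measure_inter_preimage_eq_mul _ _ measurableSet_Icc hH).symm
    _ ≤ _ := measure_mono fun ω hω => wealth_le_sub_mul_norm hW0 hz₀ hκ (hAκ x) hω.1 hω.2

end Wealth

theorem stmt17_general {Ω : Type*} [MeasurableSpace Ω] (P : Measure Ω) [IsProbabilityMeasure P]
    {d : ℕ} (μ γ : Fin d → ℝ) (A : Matrix (Fin d) (Fin d) ℝ)
    (Z : Ω → ℝ) (N : Ω → Fin d → ℝ)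
    (hZmeas : Measurable Z) (hNmeas : Measurable N)
    (hZposprob : 0 < P {ω | 0 < Z ω})
    (hNlaw : Measure.map N P = Measure.pi fun _ : Fin d => gaussianReal 0 1)
    (hindep : IndepFun Z N P)
    (hPD : (A * Aᵀ).PosDef)
    (rf W0 : ℝ) (hW0 : 0 < W0)
    (U : ℝ → ℝ) (hUcont : Continuous U) (hUmono : Monotone U)
    (hUbdd : BddAbove (Set.range U)) (hUbot : Tendsto U atBot atBot) :
    ∃ x₀ : Fin d → ℝ,
      (eexp P fun ω => U (wealth μ γ A Z N rf W0 x₀ ω)) ≠ ⊥ ∧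
      (eexp P fun ω => U (wealth μ γ A Z N rf W0 x₀ ω)) ≠ ⊤ ∧
      ∀ x : Fin d → ℝ,
        (eexp P fun ω => U (wealth μ γ A Z N rf W0 x ω)) ≤
          eexp P fun ω => U (wealth μ γ A Z N rf W0 x₀ ω) := by
  obtain ⟨M, hM0, hUM⟩ : ∃ M, 0 ≤ M ∧ ∀ w, U w ≤ M :=
    let ⟨M, hM⟩ := hUbdd
    ⟨max M 0, le_max_right _ _, fun w => (hM ⟨w, rfl⟩).trans (le_max_left _ _)⟩
  set L := fun x => ∫⁻ ω, ENNReal.ofReal (M - U (wealth μ γ A Z N rf W0 x ω)) ∂P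
  have hmeas : ∀ x, Measurable fun ω => U (wealth μ γ A Z N rf W0 x ω) := fun x =>
    hUcont.measurable.comp (measurable_wealth hZmeas hNmeas x)
  have heexp : ∀ x, (eexp P fun ω => U (wealth μ γ A Z N rf W0 x ω)) = (M : EReal) - L x :=
    fun x => eexp_eq_sub_lintegral (hmeas x) hM0 fun ω => hUM _
  have hLsc : LowerSemicontinuous L :=
    lowerSemicontinuous_lintegral (fun x => ((hmeas x).const_sub M).ennreal_ofReal) fun ω =>
      (ENNReal.continuous_ofReal.comp <| continuous_const.sub <|
        hUcont.comp (continuous_wealth ω)).lowerSemicontinuous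
  have hL0 : L 0 ≠ ⊤ := by simp [L, wealth]
  obtain ⟨δ, hδ, hdown⟩ :=
    exists_forall_le_measure_wealth_le hNmeas hZposprob.ne' hNlaw hindep
      (isUnit_of_mul_isUnit_left hPD.isUnit) hW0.le
  obtain ⟨x₀, hx₀⟩ := hLsc.exists_forall_le' 0 <|
    (tendsto_lintegral_ofReal_sub_comp_cocompact hmeas hUmono hUbot M _ hW0 hδ hdown).eventually
      (eventually_ge_nhds hL0.lt_top)
  have hLx₀ : ((L x₀).toReal : EReal) = L x₀ :=
    EReal.coe_ennreal_toReal (ne_top_of_le_ne_top hL0 (hx₀ 0))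
  refine ⟨x₀, ?_, ?_, fun x => ?_⟩
  · rw [heexp, ← hLx₀, ← EReal.coe_sub]; exact EReal.coe_ne_bot _
  · rw [heexp, ← hLx₀, ← EReal.coe_sub]; exact EReal.coe_ne_top _
  · rw [heexp, heexp]
    exact EReal.sub_le_sub le_rfl (EReal.coe_ennreal_le_coe_ennreal_iff.2 (hx₀ x))

/-- if `U` is finite-valued, continuous, non-decreasing, bounded from above,
`U(w) → −∞` as `w → −∞`, and `P(Z > 0) > 0`, then `sup_x E[U(W(x))]` is finite and is
attained at some portfolio `x₀` of finite Euclidean norm. -/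
theorem stmt17 {Ω : Type*} [MeasurableSpace Ω] (P : Measure Ω) [IsProbabilityMeasure P]
    {d : ℕ} (μ γ : Fin d → ℝ) (A : Matrix (Fin d) (Fin d) ℝ)
    (Z : Ω → ℝ) (N : Ω → Fin d → ℝ)
    (hZmeas : Measurable Z) (hNmeas : Measurable N)
    (hZnonneg : ∀ ω, 0 ≤ Z ω)
    (hZposprob : 0 < P {ω | 0 < Z ω})
    (hNlaw : Measure.map N P = Measure.pi fun _ : Fin d => gaussianReal 0 1)
    (hindep : IndepFun Z N P)
    (hPD : (A * Aᵀ).PosDef)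
    (rf W0 : ℝ) (hW0 : 0 < W0)
    (hμrf : (fun i => μ i - rf) ≠ 0)
    (U : ℝ → ℝ) (hUcont : Continuous U) (hUmono : Monotone U)
    (hUbdd : BddAbove (Set.range U)) (hUbot : Tendsto U atBot atBot) :
    ∃ x₀ : Fin d → ℝ,
      (eexp P fun ω => U (wealth μ γ A Z N rf W0 x₀ ω)) ≠ ⊥ ∧
      (eexp P fun ω => U (wealth μ γ A Z N rf W0 x₀ ω)) ≠ ⊤ ∧
      ∀ x : Fin d → ℝ,
        (eexp P fun ω => U (wealth μ γ A Z N rf W0 x ω)) ≤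
          eexp P fun ω => U (wealth μ γ A Z N rf W0 x₀ ω) :=
  stmt17_general P μ γ A Z N hZmeas hNmeas hZposprob hNlaw hindep hPD rf W0 hW0 U hUcont hUmono
    hUbdd hUbot

end
end
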